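/- arXiv:1706.05260 — 9 statements merged into one kernel-verified Lean document; each statement's English description precedes it below -/
import Mathlib

section
/- Let X be a real Banach space, H a real Hilbert space, ι : H → X an injective continuous linear map, and f : X → ℝ a convex, lower semicontinuous function. For every x ∈ X, the minimizer P(x,α) converges to 0 in H as α → 0⁺, i.e. lim_{α→0⁺} |P(x,α)|_H = 0. -/
open scoped RealInnerProductSpace

/-- A convex lower semicontinuous function on a real normed space is bounded
below by a continuous affine function. -/
lemma exists_affine_le_aux {X : Type*} [NormedAddCommGroup X] [NormedSpace ℝ X]
    (f : X → ℝ) (hconv : ConvexOn ℝ Set.univ f) (hlsc : LowerSemicontinuous f) :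
    ∃ (g : X →L[ℝ] ℝ) (c : ℝ), ∀ y, g y + c ≤ f y := by
  set s : Set (X × ℝ) := {p : X × ℝ | f p.1 ≤ p.2} with hs
  have hconv_s : Convex ℝ s := by
    have := hconv.convex_epigraph
    simpa using this
  have hclosed_s : IsClosed s := by
    have hF : LowerSemicontinuous (fun p : X × ℝ => f p.1 - p.2) := by
      have h1 : LowerSemicontinuous (fun p : X × ℝ => f p.1) :=
        hlsc.comp continuous_fst
      have h2 : Continuous (fun p : X × ℝ => -p.2) := continuous_snd.neg
      simpa [sub_eq_add_neg] using h1.add h2.lowerSemicontinuous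
    have : s = (fun p : X × ℝ => f p.1 - p.2) ⁻¹' Set.Iic 0 := by
      ext p; simp [hs, sub_nonpos]
    rw [this]
    exact hF.isClosed_preimage 0
  have hnot : ((0 : X), f 0 - 1) ∉ s := by
    simp [hs]
  obtain ⟨φ, u, hu1, hu2⟩ := geometric_hahn_banach_point_closed hconv_s hclosed_s hnot
  set a : ℝ := φ (0, 1) with ha
  have key : ∀ (y : X) (t : ℝ), φ (y, t) = φ (y, 0) + t * a := by
    intro y t
    have : (y, t) = (y, (0 : ℝ)) + t • ((0 : X), (1 : ℝ)) := by
      simp [Prod.ext_iff]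
    rw [this, map_add, map_smul, smul_eq_mul]
  have ha_pos : 0 < a := by
    have h1 : u < φ (0, f 0) := hu2 _ (by simp [hs])
    have h2 : φ ((0 : X), f 0 - 1) < u := hu1
    rw [key] at h1 h2
    nlinarith
  refine ⟨-(a⁻¹) • (φ.comp (ContinuousLinearMap.inl ℝ X ℝ)), u / a, fun y => ?_⟩
  have h1 : u < φ (y, f y) := hu2 _ (by simp [hs])
  rw [key] at h1
  have : φ (y, 0) + f y * a > u := h1
  have h2 : f y > (u - φ (y, 0)) / a := by
    rw [gt_iff_lt, div_lt_iff₀ ha_pos]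
    nlinarith
  simp only [ContinuousLinearMap.coe_smul', Pi.smul_apply, ContinuousLinearMap.coe_comp',
    Function.comp_apply, ContinuousLinearMap.inl_apply, smul_eq_mul, neg_smul,
    ContinuousLinearMap.neg_apply]
  have : (u - φ (y, 0)) / a = u / a - a⁻¹ * φ (y, 0) := by
    field_simp
  linarith [h2, this.symm.le]

/-- the minimizer `P(x, α)` of `h ↦ f (x + ι h) + ‖h‖² / (2α)`
converges to `0` in `H` as `α → 0⁺`. -/
theorem moreau_yosida_minimizer_tendsto_zero
    {X H : Type*} [NormedAddCommGroup X] [NormedSpace ℝ X] [CompleteSpace X]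
    [NormedAddCommGroup H] [InnerProductSpace ℝ H] [CompleteSpace H]
    (ι : H →L[ℝ] X) (hι : Function.Injective ι)
    (f : X → ℝ) (hconv : ConvexOn ℝ Set.univ f) (hlsc : LowerSemicontinuous f)
    (P : X → ℝ → H)
    (hP : ∀ (y : X) (α : ℝ), 0 < α → ∀ h : H,
      f (y + ι (P y α)) + ‖P y α‖ ^ 2 / (2 * α) ≤ f (y + ι h) + ‖h‖ ^ 2 / (2 * α))
    (x : X) :
    Filter.Tendsto (fun α : ℝ => P x α) (nhdsWithin 0 (Set.Ioi 0)) (nhds 0) := by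
  obtain ⟨g, c, hg⟩ := exists_affine_le_aux f hconv hlsc
  set B : ℝ := ‖g.comp ι‖ with hB
  have hB0 : 0 ≤ B := norm_nonneg _
  set A : ℝ := max (f x - c - g x) 0 with hA
  have hA0 : 0 ≤ A := le_max_right _ _
  -- key quadratic bound
  have hbound : ∀ α : ℝ, 0 < α → ‖P x α‖ ^ 2 ≤ 2 * α * A + 2 * α * B * ‖P x α‖ := by
    intro α hα
    have h0 := hP x α hα 0
    simp only [map_zero, add_zero, norm_zero] at h0
    have h0' : f (x + ι (P x α)) + ‖P x α‖ ^ 2 / (2 * α) ≤ f x := by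
      have : (0:ℝ) ^ 2 / (2 * α) = 0 := by simp
      calc f (x + ι (P x α)) + ‖P x α‖ ^ 2 / (2 * α)
          ≤ f x + (0:ℝ) ^ 2 / (2 * α) := h0
        _ = f x := by rw [this, add_zero]
    have haff : g (x + ι (P x α)) + c ≤ f (x + ι (P x α)) := hg _
    have hgι : -(B * ‖P x α‖) ≤ g (ι (P x α)) := by
      have habs : |g (ι (P x α))| ≤ B * ‖P x α‖ := by
        simpa [Real.norm_eq_abs, hB] using (g.comp ι).le_opNorm (P x α)
      linarith [(abs_le.1 habs).1]
    have hsplit : g (x + ι (P x α)) = g x + g (ι (P x α)) := by rw [map_add]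
    have hmain : ‖P x α‖ ^ 2 / (2 * α) ≤ A + B * ‖P x α‖ := by
      have h1 : f x - c - g x ≤ A := le_max_left _ _
      nlinarith [h0', haff, hgι, hsplit]
    have h2α : (0:ℝ) < 2 * α := by linarith
    calc ‖P x α‖ ^ 2 = (‖P x α‖ ^ 2 / (2 * α)) * (2 * α) := by field_simp
      _ ≤ (A + B * ‖P x α‖) * (2 * α) := by
          exact mul_le_mul_of_nonneg_right hmain h2α.le
      _ = 2 * α * A + 2 * α * B * ‖P x α‖ := by ring
  -- the majorant
  set r : ℝ → ℝ := fun α => α * B + Real.sqrt (2 * α * A + (α * B) ^ 2) with hr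
  have hle : ∀ α : ℝ, 0 < α → ‖P x α‖ ≤ r α := by
    intro α hα
    have hb := hbound α hα
    set p := ‖P x α‖ with hp
    have hsq : (p - α * B) ^ 2 ≤ 2 * α * A + (α * B) ^ 2 := by nlinarith
    have h1 : p - α * B ≤ Real.sqrt (2 * α * A + (α * B) ^ 2) := by
      calc p - α * B ≤ |p - α * B| := le_abs_self _
        _ = Real.sqrt ((p - α * B) ^ 2) := (Real.sqrt_sq_eq_abs _).symm
        _ ≤ Real.sqrt (2 * α * A + (α * B) ^ 2) := Real.sqrt_le_sqrt hsq
    simp only [hr]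
    linarith
  have hrt : Filter.Tendsto r (nhdsWithin 0 (Set.Ioi 0)) (nhds 0) := by
    have hcont : Filter.Tendsto r (nhds 0) (nhds (r 0)) := by
      apply Continuous.tendsto
      continuity
    have hr0 : r 0 = 0 := by simp [hr]
    rw [hr0] at hcont
    exact hcont.mono_left nhdsWithin_le_nhds
  rw [show (0 : H) = 0 from rfl, tendsto_zero_iff_norm_tendsto_zero]
  apply squeeze_zero' (Filter.Eventually.of_forall fun α => norm_nonneg _) _ hrt
  filter_upwards [self_mem_nhdsWithin] with α hα
  exact hle α hα
end

section
/- Let X be a real Banach space, H a real Hilbert space, ι : H → X an injective continuous linear map, and f : X → ℝ a convex, lower semicontinuous function. For every x ∈ X: (i) f_α(x) ≤ f(x) for every α > 0; (ii) if 0 < α ≤ β then f_β(x) ≤ f_α(x); (iii) lim_{α→0⁺} f_α(x) = f(x). In other words, f_α(x) increases monotonically to f(x) as α → 0⁺. -/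
open scoped RealInnerProductSpace

open Set

/-- A convex lower semicontinuous function on a Banach space has a continuous
affine minorant. -/
lemma exists_affine_minorant {X : Type*} [NormedAddCommGroup X] [NormedSpace ℝ X]
    (f : X → ℝ) (hconv : ConvexOn ℝ Set.univ f) (hlsc : LowerSemicontinuous f) :
    ∃ (φ : X →L[ℝ] ℝ) (c : ℝ), ∀ y, c + φ y ≤ f y := by
  set E : Set (X × ℝ) := {p : X × ℝ | f p.1 ≤ p.2} with hE
  have hEconv : Convex ℝ E := by simpa using hconv.convex_epigraph
  have hEclosed : IsClosed E := by
    rw [← isOpen_compl_iff, isOpen_iff_mem_nhds]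
    rintro ⟨z, t⟩ ht
    have ht' : t < f z := not_le.1 (by exact ht)
    obtain ⟨t', htt', ht'2⟩ := exists_between ht'
    have h1 : {w | t' < f w} ∈ nhds z := hlsc z t' ht'2
    have h2 : Iio t' ∈ nhds t := Iio_mem_nhds htt'
    rw [nhds_prod_eq]
    refine Filter.mem_of_superset (Filter.prod_mem_prod h1 h2) ?_
    rintro ⟨w, s⟩ ⟨hw, hs⟩
    have hs' : s < t' := hs
    have hw' : t' < f w := hw
    exact not_le.2 (lt_trans hs' hw')
  have hnot : ((0 : X), f 0 - 1) ∉ E := by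
    intro h
    have : f 0 ≤ f 0 - 1 := h
    linarith
  obtain ⟨ψ, u, hψE, hψx⟩ := geometric_hahn_banach_closed_point hEconv hEclosed hnot
  set r : ℝ := ψ (0, 1) with hr
  have hψlin : ∀ (y : X) (t : ℝ), ψ (y, t) = ψ (y, 0) + t * r := by
    intro y t
    have : (y, t) = (y, (0:ℝ)) + t • ((0:X), (1:ℝ)) := by
      simp [Prod.ext_iff]
    rw [this, map_add, map_smul, smul_eq_mul]
  have hmem : ∀ y : X, (y, f y) ∈ E := fun y => by simp only [hE, Set.mem_setOf_eq]; exact le_refl _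
  have hrneg : r < 0 := by
    have h1 : ψ (0, f 0) < u := hψE _ (hmem 0)
    have h2 : u < ψ (0, f 0 - 1) := hψx
    rw [hψlin] at h1 h2
    nlinarith [hψlin 0 (f 0)]
  have hrne : r ≠ 0 := ne_of_lt hrneg
  refine ⟨(-(1/r)) • ψ.comp (ContinuousLinearMap.inl ℝ X ℝ), u / r, fun y => ?_⟩
  have h1 : ψ (y, f y) < u := hψE _ (hmem y)
  rw [hψlin] at h1
  have happ : ((-(1/r)) • ψ.comp (ContinuousLinearMap.inl ℝ X ℝ)) y
      = -(1/r) * ψ (y, 0) := by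
    simp
  rw [happ]
  have heq : u / r + -(1/r) * ψ (y, 0) = (u - ψ (y, 0)) / r := by
    field_simp
    ring
  rw [heq, div_le_iff_of_neg hrneg]
  nlinarith

open scoped RealInnerProductSpace

/-- the Moreau–Yosida approximations
`f_α(x) = ⨅_{h ∈ H} (f (x + ι h) + ‖h‖² / (2α))` satisfy `f_α(x) ≤ f(x)`, are
monotone decreasing in `α`, and converge to `f(x)` as `α → 0⁺`. -/
theorem moreau_yosida_monotone_convergence
    {X H : Type*} [NormedAddCommGroup X] [NormedSpace ℝ X] [CompleteSpace X]
    [NormedAddCommGroup H] [InnerProductSpace ℝ H] [CompleteSpace H]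
    (ι : H →L[ℝ] X) (hι : Function.Injective ι)
    (f : X → ℝ) (hconv : ConvexOn ℝ Set.univ f) (hlsc : LowerSemicontinuous f)
    (x : X) :
    (∀ α : ℝ, 0 < α →
        (⨅ h : H, (f (x + ι h) + ‖h‖ ^ 2 / (2 * α))) ≤ f x) ∧
    (∀ α β : ℝ, 0 < α → α ≤ β →
        (⨅ h : H, (f (x + ι h) + ‖h‖ ^ 2 / (2 * β))) ≤
          (⨅ h : H, (f (x + ι h) + ‖h‖ ^ 2 / (2 * α)))) ∧
    Filter.Tendsto (fun α : ℝ => ⨅ h : H, (f (x + ι h) + ‖h‖ ^ 2 / (2 * α)))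
      (nhdsWithin 0 (Set.Ioi 0)) (nhds (f x)) := by
  obtain ⟨φ, c, hmin⟩ := exists_affine_minorant f hconv hlsc
  set C : ℝ := ‖φ.comp ι‖ + 1 with hCdef
  have hC : 0 < C := by rw [hCdef]; positivity
  clear_value C
  have hφι : ∀ h : H, -(C * ‖h‖) ≤ φ (ι h) := by
    intro h
    have h1 : |φ (ι h)| ≤ ‖φ.comp ι‖ * ‖h‖ := by
      have := (φ.comp ι).le_opNorm h
      simpa [Real.norm_eq_abs] using this
    have h2 : ‖φ.comp ι‖ * ‖h‖ ≤ C * ‖h‖ := by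
      apply mul_le_mul_of_nonneg_right _ (norm_nonneg h)
      simp [hCdef]
    have h3 := (abs_le.1 h1).1
    linarith
  have key : ∀ α : ℝ, 0 < α → ∀ h : H,
      c + φ x - C * ‖h‖ + ‖h‖ ^ 2 / (2 * α) ≤ f (x + ι h) + ‖h‖ ^ 2 / (2 * α) := by
    intro α hα h
    have h1 := hmin (x + ι h)
    rw [map_add] at h1
    have h2 := hφι h
    linarith
  have quad : ∀ α : ℝ, 0 < α → ∀ h : H,
      c + φ x - α * C ^ 2 / 2 ≤ f (x + ι h) + ‖h‖ ^ 2 / (2 * α) := by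
    intro α hα h
    have h2 : C * ‖h‖ - α * C ^ 2 / 2 ≤ ‖h‖ ^ 2 / (2 * α) := by
      rw [le_div_iff₀ (show (0:ℝ) < 2 * α by positivity)]
      nlinarith [sq_nonneg (‖h‖ - α * C)]
    linarith [key α hα h]
  have hbdd : ∀ α : ℝ, 0 < α →
      BddBelow (Set.range fun h : H => f (x + ι h) + ‖h‖ ^ 2 / (2 * α)) := by
    intro α hα
    refine ⟨c + φ x - α * C ^ 2 / 2, ?_⟩
    rintro _ ⟨h, rfl⟩
    exact quad α hα h
  have hub : ∀ α : ℝ, 0 < α →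
      (⨅ h : H, (f (x + ι h) + ‖h‖ ^ 2 / (2 * α))) ≤ f x := by
    intro α hα
    have := ciInf_le (hbdd α hα) 0
    simpa using this
  refine ⟨hub, fun α β hα hαβ => ?_, ?_⟩
  · refine ciInf_mono (hbdd β (hα.trans_le hαβ)) fun h => ?_
    have hβ : 0 < β := hα.trans_le hαβ
    gcongr
  · rw [Metric.tendsto_nhdsWithin_nhds]
    intro ε hε
    have hlt : f x - ε / 2 < f x := by linarith
    have hev := hlsc x (f x - ε / 2) hlt
    rw [Metric.eventually_nhds_iff] at hev
    obtain ⟨δ, hδ, hball⟩ := hev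
    set r : ℝ := δ / (‖ι‖ + 1) with hrdef
    have hr : 0 < r := by rw [hrdef]; positivity
    clear_value r
    set M : ℝ := f x - ε / 2 - c - φ x + C * r with hMdef
    clear_value M
    set K : ℝ := max M 1 with hKdef
    have hK : (0:ℝ) < K := by
      rw [hKdef]; exact lt_of_lt_of_le one_pos (le_max_right _ _)
    have hMK : M ≤ K := by rw [hKdef]; exact le_max_left _ _
    clear_value K
    set α₀ : ℝ := min (r / C) (r ^ 2 / (2 * K)) with hα₀def
    have hα₀ : 0 < α₀ := by
      rw [hα₀def]
      exact lt_min (div_pos hr hC) (div_pos (pow_pos hr 2) (by linarith))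
    have hα₀left : α₀ ≤ r / C := by rw [hα₀def]; exact min_le_left _ _
    have hα₀right : α₀ ≤ r ^ 2 / (2 * K) := by rw [hα₀def]; exact min_le_right _ _
    clear_value α₀
    refine ⟨α₀, hα₀, fun {α} hαmem hαdist => ?_⟩
    have hα : 0 < α := hαmem
    have hαlt : α < α₀ := by
      rw [Real.dist_eq, sub_zero, abs_of_pos hα] at hαdist
      exact hαdist
    have hlow : ∀ h : H, f x - ε / 2 ≤ f (x + ι h) + ‖h‖ ^ 2 / (2 * α) := by
      intro h
      by_cases hcase : ‖h‖ < r
      · have hι_small : dist (x + ι h) x < δ := by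
          rw [dist_eq_norm]
          simp only [add_sub_cancel_left]
          calc ‖ι h‖ ≤ ‖ι‖ * ‖h‖ := ι.le_opNorm h
            _ ≤ (‖ι‖ + 1) * ‖h‖ := by nlinarith [norm_nonneg h]
            _ < (‖ι‖ + 1) * r := by
                exact mul_lt_mul_of_pos_left hcase (by positivity)
            _ = δ := by rw [hrdef]; field_simp
        have hf := hball hι_small
        have hq : 0 ≤ ‖h‖ ^ 2 / (2 * α) := by positivity
        linarith
      · push_neg at hcase
        have h1 := key α hα h
        have hαC : α * C ≤ r := by
          have h2 : α ≤ r / C := le_of_lt (hαlt.trans_le hα₀left)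
          rw [le_div_iff₀ hC] at h2
          exact h2
        have hmono : C * (‖h‖ - r) ≤ (‖h‖ ^ 2 - r ^ 2) / (2 * α) := by
          rw [le_div_iff₀ (show (0:ℝ) < 2 * α by positivity)]
          nlinarith
        rw [sub_div] at hmono
        have hMα : M ≤ r ^ 2 / (2 * α) := by
          have hαb : α < r ^ 2 / (2 * K) := hαlt.trans_le hα₀right
          have hKb : K ≤ r ^ 2 / (2 * α) := by
            rw [le_div_iff₀ (show (0:ℝ) < 2 * α by positivity)]
            rw [lt_div_iff₀ (show (0:ℝ) < 2 * K by positivity)] at hαb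
            nlinarith
          exact le_trans hMK hKb
        have hMeq : c + φ x - C * r + M = f x - ε / 2 := by rw [hMdef]; ring
        linarith
    have hlb : f x - ε / 2 ≤ ⨅ h : H, (f (x + ι h) + ‖h‖ ^ 2 / (2 * α)) :=
      le_ciInf hlow
    have hub' := hub α hα
    rw [Real.dist_eq, abs_lt]
    constructor <;> [linarith; linarith]
end

section
/- Let X be a real Banach space, H a real Hilbert space, ι : H → X an injective continuous linear map, and f : X → ℝ a convex, lower semicontinuous function. Then for every α > 0 the Moreau–Yosida approximation f_α is differentiable along H at every point x ∈ X, with ∇_H f_α(x) = −α^{-1} P(x,α); that is, the map h ↦ f_α(x + ι h) from H to ℝ is Fréchet differentiable at 0 and its derivative is the linear functional k ↦ ⟨−α^{-1} P(x,α), k⟩_H. -/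
open scoped RealInnerProductSpace

/-- the Moreau–Yosida approximation `f_α` is differentiable along `H`
at every `x`, with gradient along `H` equal to `-α⁻¹ P(x, α)`: the map
`h ↦ f_α (x + ι h)` is Fréchet differentiable at `0` with derivative
`k ↦ ⟪-α⁻¹ P(x,α), k⟫`. -/
theorem moreau_yosida_differentiable_along_H
    {X H : Type*} [NormedAddCommGroup X] [NormedSpace ℝ X] [CompleteSpace X]
    [NormedAddCommGroup H] [InnerProductSpace ℝ H] [CompleteSpace H]
    (ι : H →L[ℝ] X) (hι : Function.Injective ι)
    (f : X → ℝ) (hconv : ConvexOn ℝ Set.univ f) (hlsc : LowerSemicontinuous f)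
    (P : X → ℝ → H)
    (hP : ∀ (y : X) (α : ℝ), 0 < α → ∀ h : H,
      f (y + ι (P y α)) + ‖P y α‖ ^ 2 / (2 * α) ≤ f (y + ι h) + ‖h‖ ^ 2 / (2 * α))
    (x : X) (α : ℝ) (hα : 0 < α) :
    HasFDerivAt (fun h : H => ⨅ k : H, (f (x + ι h + ι k) + ‖k‖ ^ 2 / (2 * α)))
      (innerSL ℝ (-α⁻¹ • P x α)) 0 := by
  have h2α : (0:ℝ) < 2 * α := by linarith
  set F : H → ℝ := fun h => ⨅ k : H, (f (x + ι h + ι k) + ‖k‖ ^ 2 / (2 * α)) with hFdef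
  set p : H := P x α with hpdef
  -- convexity along H
  have hg : ∀ (a b : H) (s t : ℝ), 0 ≤ s → 0 ≤ t → s + t = 1 →
      f (x + ι (s • a + t • b)) ≤ s * f (x + ι a) + t * f (x + ι b) := by
    intro a b s t hs ht hst
    have key := hconv.2 (Set.mem_univ (x + ι a)) (Set.mem_univ (x + ι b)) hs ht hst
    have e : s • (x + ι a) + t • (x + ι b) = x + ι (s • a + t • b) := by
      have hx : s • x + t • x = x := by rw [← add_smul, hst, one_smul]
      simp only [smul_add, map_add, map_smul]
      rw [show s • x + s • ι a + (t • x + t • ι b)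
        = (s • x + t • x) + (s • ι a + t • ι b) by abel, hx]
    rwa [e] at key
  -- minimality in intrinsic form
  have hmin : ∀ h w : H, f (x + ι (h + P (x + ι h) α)) + ‖P (x + ι h) α‖ ^ 2 / (2 * α)
      ≤ f (x + ι (h + w)) + ‖w‖ ^ 2 / (2 * α) := by
    intro h w
    have := hP (x + ι h) α hα w
    simpa only [map_add, add_assoc] using this
  -- variational inequality
  have VI : ∀ h k : H, f (x + ι (h + P (x + ι h) α)) ≤
      f (x + ι k) + ⟪P (x + ι h) α, k - (h + P (x + ι h) α)⟫ / α := by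
    intro h k
    set a := P (x + ι h) α with ha
    refine le_of_forall_pos_le_add fun ε hε => ?_
    set D := ‖k - (h + a)‖ ^ 2 with hD
    have hD0 : 0 ≤ D := sq_nonneg _
    set t : ℝ := min 1 (2 * α * ε / (D + 1)) with ht
    have ht0 : 0 < t := lt_min one_pos (by positivity)
    have ht1 : t ≤ 1 := min_le_left _ _
    have htD : t * D / (2 * α) ≤ ε := by
      have h1 : t ≤ 2 * α * ε / (D + 1) := min_le_right _ _
      rw [div_le_iff₀ h2α]
      calc t * D ≤ (2 * α * ε / (D + 1)) * D := by nlinarith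
        _ ≤ ε * (2 * α) := by
            rw [div_mul_eq_mul_div, div_le_iff₀ (by positivity)]
            nlinarith
    have hmin' := hmin h (a + t • (k - (h + a)))
    have e1 : h + (a + t • (k - (h + a))) = (1 - t) • (h + a) + t • k := by module
    rw [e1] at hmin'
    have hcx := hg (h + a) k (1 - t) t (by linarith) ht0.le (by ring)
    have hnorm : ‖a + t • (k - (h + a))‖ ^ 2
        = ‖a‖ ^ 2 + 2 * (t * ⟪a, k - (h + a)⟫) + t ^ 2 * D := by
      rw [norm_add_sq_real, real_inner_smul_right, norm_smul, mul_pow, hD]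
      rw [Real.norm_eq_abs, sq_abs]
    rw [hnorm] at hmin'
    have e2 : (‖a‖ ^ 2 + 2 * (t * ⟪a, k - (h + a)⟫) + t ^ 2 * D) / (2 * α)
        = ‖a‖ ^ 2 / (2 * α) + t * (⟪a, k - (h + a)⟫ / α) + t * (t * D / (2 * α)) := by
      field_simp
    rw [e2] at hmin'
    have hstep : t * f (x + ι (h + a)) ≤
        t * (f (x + ι k) + ⟪a, k - (h + a)⟫ / α + t * D / (2 * α)) := by
      nlinarith [hmin', hcx]
    have hA := le_of_mul_le_mul_left hstep ht0
    linarith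
  have hq0 : P (x + ι 0) α = p := by rw [hpdef]; simp
  -- monotonicity consequence
  have hkey : ∀ h : H, ‖p - P (x + ι h) α‖ ^ 2 ≤ ⟪p - P (x + ι h) α, h⟫ := by
    intro h
    set a := P (x + ι h) α with ha
    have h1 := VI h p
    have h2 := VI 0 (h + a)
    rw [hq0] at h2
    simp only [zero_add] at h2
    have hsum : 0 ≤ ⟪a, p - (h + a)⟫ / α + ⟪p, h + a - p⟫ / α := by linarith
    rw [← add_div] at hsum
    have hsum' := (le_div_iff₀ hα).1 hsum
    rw [zero_mul] at hsum'
    have expand : ⟪a, p - (h + a)⟫ + ⟪p, h + a - p⟫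
        = ⟪p - a, h⟫ - ⟪p - a, p - a⟫ := by
      simp only [inner_sub_left, inner_sub_right, inner_add_left, inner_add_right]
      linarith [real_inner_comm a p]
    rw [expand] at hsum'
    rw [← real_inner_self_eq_norm_sq]
    linarith
  -- inf equals min
  have hF : ∀ h : H, F h
      = f (x + ι h + ι (P (x + ι h) α)) + ‖P (x + ι h) α‖ ^ 2 / (2 * α) := by
    intro h
    have hbdd : BddBelow (Set.range fun k : H => f (x + ι h + ι k) + ‖k‖ ^ 2 / (2 * α)) := by
      refine ⟨f (x + ι h + ι (P (x + ι h) α)) + ‖P (x + ι h) α‖ ^ 2 / (2 * α), ?_⟩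
      rintro y ⟨k, rfl⟩
      exact hP (x + ι h) α hα k
    exact le_antisymm (ciInf_le hbdd (P (x + ι h) α)) (le_ciInf fun k => hP (x + ι h) α hα k)
  have hF0 : F 0 = f (x + ι p) + ‖p‖ ^ 2 / (2 * α) := by
    rw [hF 0, hq0]
    simp
  -- the two-sided estimate
  have key : ∀ h : H, |F h - F 0 - (-(α⁻¹ * ⟪p, h⟫))| ≤ ‖h‖ ^ 2 / (2 * α) := by
    intro h
    set a := P (x + ι h) α with ha
    -- upper bound
    have hup : F h ≤ F 0 + (-(α⁻¹ * ⟪p, h⟫)) + ‖h‖ ^ 2 / (2 * α) := by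
      have h1 : F h ≤ f (x + ι h + ι (p - h)) + ‖p - h‖ ^ 2 / (2 * α) := by
        rw [hF h]
        exact hP (x + ι h) α hα (p - h)
      have e : x + ι h + ι (p - h) = x + ι p := by
        rw [add_assoc, ← map_add, show h + (p - h) = p by abel]
      rw [e, norm_sub_sq_real] at h1
      have e2 : (‖p‖ ^ 2 - 2 * ⟪p, h⟫ + ‖h‖ ^ 2) / (2 * α)
          = ‖p‖ ^ 2 / (2 * α) + (-(α⁻¹ * ⟪p, h⟫)) + ‖h‖ ^ 2 / (2 * α) := by
        field_simp
        ring
      rw [e2] at h1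
      rw [hF0]
      linarith
    -- lower bound
    have hlo : F 0 ≤ F h + (α⁻¹ * ⟪p, h⟫) + ‖h‖ ^ 2 / (2 * α) := by
      have h1 : F 0 ≤ f (x + ι (h + a)) + ‖h + a‖ ^ 2 / (2 * α) := by
        rw [hF0]
        have := hP x α hα (h + a)
        exact this
      have e : x + ι (h + a) = x + ι h + ι a := by rw [map_add, add_assoc]
      rw [e, norm_add_sq_real] at h1
      have h2 : F h = f (x + ι h + ι a) + ‖a‖ ^ 2 / (2 * α) := hF h
      have hk := hkey h
      rw [inner_sub_left] at hk
      have hk0 : (0:ℝ) ≤ ‖p - a‖ ^ 2 := sq_nonneg _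
      have hia : ⟪a, h⟫ ≤ ⟪p, h⟫ := by linarith
      have e2 : (‖h‖ ^ 2 + 2 * ⟪h, a⟫ + ‖a‖ ^ 2) / (2 * α)
          = ‖h‖ ^ 2 / (2 * α) + α⁻¹ * ⟪h, a⟫ + ‖a‖ ^ 2 / (2 * α) := by
        field_simp
      rw [e2] at h1
      have hcomm : ⟪h, a⟫ = ⟪a, h⟫ := real_inner_comm a h
      have hmono : α⁻¹ * ⟪h, a⟫ ≤ α⁻¹ * ⟪p, h⟫ := by
        rw [hcomm]
        exact mul_le_mul_of_nonneg_left hia (by positivity)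
      linarith
    rw [abs_le]
    constructor <;> linarith
  -- conclude
  rw [hasFDerivAt_iff_isLittleO_nhds_zero, Asymptotics.isLittleO_iff]
  intro c hc
  filter_upwards [Metric.ball_mem_nhds (0:H) (show (0:ℝ) < 2 * α * c by positivity)] with h hh
  rw [Metric.mem_ball, dist_zero_right] at hh
  have hLval : (innerSL ℝ (-α⁻¹ • p)) h = -(α⁻¹ * ⟪p, h⟫) := by
    simp only [innerSL_apply_apply, real_inner_smul_left]
    ring
  simp only [zero_add, hLval]
  rw [Real.norm_eq_abs]
  calc |F h - F 0 - (-(α⁻¹ * ⟪p, h⟫))| ≤ ‖h‖ ^ 2 / (2 * α) := key h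
    _ ≤ c * ‖h‖ := by
        rw [div_le_iff₀ h2α]
        nlinarith [norm_nonneg h, hh]
end

section
/- Let X be a real Banach space, H a real Hilbert space, ι : H → X an injective continuous linear map, and f : X → ℝ a convex, lower semicontinuous function. Fix x ∈ X and α > 0. Then −α^{-1} P(x,α) is a subgradient at the point P(x,α) of the convex function F : H → ℝ defined by F(h) := f(x + ι h); that is, for every k ∈ H, f(x + ι k) ≥ f(x + ι P(x,α)) + ⟨−α^{-1} P(x,α), k − P(x,α)⟩_H. -/
open scoped RealInnerProductSpace

/-- `-α⁻¹ P(x,α)` is a subgradient at `P(x,α)` of the convex function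
`F(h) := f (x + ι h)` on `H`. -/
theorem moreau_yosida_gradient_subdifferential
    {X H : Type*} [NormedAddCommGroup X] [NormedSpace ℝ X] [CompleteSpace X]
    [NormedAddCommGroup H] [InnerProductSpace ℝ H] [CompleteSpace H]
    (ι : H →L[ℝ] X) (hι : Function.Injective ι)
    (f : X → ℝ) (hconv : ConvexOn ℝ Set.univ f) (hlsc : LowerSemicontinuous f)
    (P : X → ℝ → H)
    (hP : ∀ (y : X) (α : ℝ), 0 < α → ∀ h : H,
      f (y + ι (P y α)) + ‖P y α‖ ^ 2 / (2 * α) ≤ f (y + ι h) + ‖h‖ ^ 2 / (2 * α))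
    (x : X) (α : ℝ) (hα : 0 < α) :
    ∀ k : H, f (x + ι k) ≥ f (x + ι (P x α)) + ⟪-α⁻¹ • P x α, k - P x α⟫ := by
  intro k
  set p := P x α with hp
  set v := k - p with hv
  set β := (2*α)⁻¹ with hβ
  have hβpos : 0 < β := by positivity
  set a := f (x + ι p) with ha
  set b := f (x + ι k) with hb
  set c := ⟪p, v⟫ with hc
  set n := ‖v‖^2 with hn
  have key : ∀ t : ℝ, 0 < t → t ≤ 1 → -(t*n*β) ≤ b - a + 2*c*β := by
    intro t ht ht1
    have hmin := hP x α hα (p + t•v)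
    have hcvx := hconv.2 (Set.mem_univ (x + ι p)) (Set.mem_univ (x + ι k))
      (by linarith : (0:ℝ) ≤ 1 - t) (le_of_lt ht) (by ring)
    have hpt : x + ι (p + t•v) = (1-t)•(x + ι p) + t•(x + ι k) := by
      simp only [map_add, map_smul, hv, map_sub]
      module
    rw [← hpt] at hcvx
    have hnorm : ‖p + t•v‖^2 = ‖p‖^2 + 2*(t*c) + t^2*n := by
      rw [norm_add_sq_real, real_inner_smul_right, norm_smul, Real.norm_eq_abs,
        abs_of_pos ht, hn, hc]
      ring
    have hdiv : ∀ y : ℝ, y / (2*α) = y * β := fun y => by rw [hβ, div_eq_mul_inv]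
    rw [hdiv, hdiv, hnorm] at hmin
    simp only [← hp, ← ha, ← hb] at hmin
    simp only [smul_eq_mul, ← ha, ← hb] at hcvx
    have H : t*a ≤ t*b + (2*t*c + t^2*n)*β := by nlinarith [hmin, hcvx]
    have H2 : t * (a - b - 2*c*β) ≤ t * (t*n*β) := by nlinarith [H]
    have H3 := (mul_le_mul_iff_right₀ ht).mp H2
    linarith
  have hev : ∀ᶠ t in nhdsWithin (0:ℝ) (Set.Ioi 0), -(t*n*β) ≤ b - a + 2*c*β := by
    filter_upwards [Ioc_mem_nhdsGT_of_mem
      (by constructor <;> norm_num : (0:ℝ) ∈ Set.Ico 0 1)] with t htt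
    exact key t htt.1 htt.2
  have htend : Filter.Tendsto (fun t : ℝ => -(t*n*β)) (nhdsWithin 0 (Set.Ioi 0)) (nhds 0) := by
    have hcont : Continuous (fun t : ℝ => -(t*n*β)) := by continuity
    have h2 := (hcont.tendsto 0).mono_left (nhdsWithin_le_nhds (s := Set.Ioi (0:ℝ)))
    simpa using h2
  have hle : (0:ℝ) ≤ b - a + 2*c*β := le_of_tendsto htend hev
  have hinner : ⟪-α⁻¹ • p, k - p⟫ = -(2*c*β) := by
    rw [← hv, real_inner_smul_left, ← hc, hβ]
    field_simp
  rw [hinner]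
  linarith
end

section
/- Let X be a real Banach space, H a real Hilbert space, ι : H → X an injective continuous linear map, and f : X → ℝ a convex, lower semicontinuous function. Fix x ∈ X and α > 0, and assume that f is differentiable along H at the point x + ι P(x,α), with gradient ∇_H f(x + ι P(x,α)) ∈ H. Then ∇_H f_α(x) = ∇_H f(x + ι P(x,α)); equivalently, −α^{-1} P(x,α) = ∇_H f(x + ι P(x,α)). -/
open scoped RealInnerProductSpace

/-- if `f` is differentiable along `H` at `x + ι P(x,α)` with gradient
`v ∈ H`, then the gradient along `H` of `f_α` at `x`, namely `-α⁻¹ P(x,α)`,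
equals `v = ∇_H f (x + ι P(x,α))`. -/
theorem moreau_yosida_gradient_eq
    {X H : Type*} [NormedAddCommGroup X] [NormedSpace ℝ X] [CompleteSpace X]
    [NormedAddCommGroup H] [InnerProductSpace ℝ H] [CompleteSpace H]
    (ι : H →L[ℝ] X) (hι : Function.Injective ι)
    (f : X → ℝ) (hconv : ConvexOn ℝ Set.univ f) (hlsc : LowerSemicontinuous f)
    (P : X → ℝ → H)
    (hP : ∀ (y : X) (α : ℝ), 0 < α → ∀ h : H,
      f (y + ι (P y α)) + ‖P y α‖ ^ 2 / (2 * α) ≤ f (y + ι h) + ‖h‖ ^ 2 / (2 * α))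
    (x : X) (α : ℝ) (hα : 0 < α) (v : H)
    (hdiff : HasFDerivAt (fun h : H => f (x + ι (P x α) + ι h)) (innerSL ℝ v) 0) :
    -α⁻¹ • P x α = v := by
  set p := P x α with hp
  -- the full objective shifted by p has a global minimum at 0
  have hmin : IsLocalMin (fun h : H => f (x + ι p + ι h) + ‖p + h‖ ^ 2 / (2 * α)) 0 := by
    apply Filter.Eventually.of_forall
    intro h
    have := hP x α hα (p + h)
    simpa [map_add, add_assoc] using this
  -- derivative of the shifted objective at 0
  have hnorm : HasFDerivAt (fun h : H => ‖p + h‖ ^ 2 / (2 * α))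
      ((2 * α)⁻¹ • (2 • (innerSL ℝ p))) 0 := by
    have h1 : HasFDerivAt (fun h : H => p + h) (ContinuousLinearMap.id ℝ H) 0 :=
      (hasFDerivAt_id (0 : H)).const_add p
    have h2 := h1.norm_sq
    simp only [add_zero, ContinuousLinearMap.comp_id] at h2
    simpa [div_eq_inv_mul] using h2.const_mul (2 * α)⁻¹
  have htot : HasFDerivAt (fun h : H => f (x + ι p + ι h) + ‖p + h‖ ^ 2 / (2 * α))
      (innerSL ℝ v + (2 * α)⁻¹ • (2 • (innerSL ℝ p))) 0 := hdiff.add hnorm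
  have hzero := hmin.hasFDerivAt_eq_zero htot
  have key : ∀ k : H, ⟪v + α⁻¹ • p, k⟫ = 0 := by
    intro k
    have h0 := ContinuousLinearMap.ext_iff.mp hzero k
    simp only [ContinuousLinearMap.add_apply, ContinuousLinearMap.smul_apply, two_smul,
      ContinuousLinearMap.zero_apply, innerSL_apply_apply, smul_eq_mul] at h0
    rw [inner_add_left, real_inner_smul_left]
    have hαne : α ≠ 0 := hα.ne'
    field_simp at h0 ⊢
    linarith [h0]
  have h4 : v + α⁻¹ • p = 0 := by
    have := key (v + α⁻¹ • p)
    exact inner_self_eq_zero.mp this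
  have : v = -α⁻¹ • p := by
    rw [neg_smul]
    linear_combination (norm := module) h4
  exact this.symm
end

section
/- Let X be a real Banach space, H a real Hilbert space, ι : H → X an injective continuous linear map, and f : X → ℝ a convex, lower semicontinuous function. Fix x ∈ X and assume that f is differentiable along H at x, with gradient ∇_H f(x) ∈ H. Then ∇_H f_α(x) = −α^{-1} P(x,α) converges to ∇_H f(x) in the norm of H as α → 0⁺. -/
open scoped RealInnerProductSpace

/-- if `f` is differentiable along `H` at `x` with gradient `v ∈ H`,
then `∇_H f_α (x) = -α⁻¹ P(x,α)` converges to `v = ∇_H f (x)` in `H` as `α → 0⁺`. -/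
theorem moreau_yosida_gradient_convergence
    {X H : Type*} [NormedAddCommGroup X] [NormedSpace ℝ X] [CompleteSpace X]
    [NormedAddCommGroup H] [InnerProductSpace ℝ H] [CompleteSpace H]
    (ι : H →L[ℝ] X) (hι : Function.Injective ι)
    (f : X → ℝ) (hconv : ConvexOn ℝ Set.univ f) (hlsc : LowerSemicontinuous f)
    (P : X → ℝ → H)
    (hP : ∀ (y : X) (α : ℝ), 0 < α → ∀ h : H,
      f (y + ι (P y α)) + ‖P y α‖ ^ 2 / (2 * α) ≤ f (y + ι h) + ‖h‖ ^ 2 / (2 * α))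
    (x : X) (v : H)
    (hdiff : HasFDerivAt (fun h : H => f (x + ι h)) (innerSL ℝ v) 0) :
    Filter.Tendsto (fun α : ℝ => -α⁻¹ • P x α) (nhdsWithin 0 (Set.Ioi 0)) (nhds v) := by
  -- derivative of t ↦ f (x + ι (t • h)) at 0 is ⟪v, h⟫
  have hder : ∀ h : H, HasDerivAt (fun t : ℝ => f (x + ι (t • h))) (⟪v, h⟫) 0 := by
    intro h
    have hd : HasDerivAt (fun t : ℝ => t • h) h 0 := by
      simpa using (hasDerivAt_id (0 : ℝ)).smul_const h
    have h0 : HasFDerivAt (fun k : H => f (x + ι k)) (innerSL ℝ v) ((fun t : ℝ => t • h) 0) := by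
      simpa using hdiff
    simpa only [Function.comp_def, innerSL_apply_apply] using h0.comp_hasDerivAt 0 hd
  -- subgradient inequality
  have hsub : ∀ h : H, f x + ⟪v, h⟫ ≤ f (x + ι h) := by
    intro h
    have hslope : Filter.Tendsto (slope (fun t : ℝ => f (x + ι (t • h))) 0)
        (nhdsWithin 0 (Set.Ioi 0)) (nhds ⟪v, h⟫) := by
      refine (hasDerivAt_iff_tendsto_slope.mp (hder h)).mono_left ?_
      exact nhdsWithin_mono 0 (fun t ht => Set.mem_compl_singleton_iff.mpr (ne_of_gt ht))
    have hle : ⟪v, h⟫ ≤ f (x + ι h) - f x := by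
      refine le_of_tendsto hslope ?_
      filter_upwards [Ioo_mem_nhdsGT_of_mem (by constructor <;> norm_num : (0:ℝ) ∈ Set.Ico 0 1)]
        with t ht
      obtain ⟨ht0, ht1⟩ := ht
      have hc := hconv.2 (Set.mem_univ x) (Set.mem_univ (x + ι h))
        (by linarith : (0:ℝ) ≤ 1 - t) (le_of_lt ht0) (by ring)
      have heq : (1 - t) • x + t • (x + ι h) = x + ι (t • h) := by
        rw [map_smul]; module
      rw [heq] at hc
      simp only [smul_eq_mul] at hc
      simp only [slope_def_field, sub_zero, zero_smul, map_zero, add_zero]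
      rw [div_le_iff₀ ht0]
      nlinarith
    linarith
  -- the remainder r α / α → 0
  set r : ℝ → ℝ := fun α => f (x + ι (-(α • v))) - f x + α * ‖v‖ ^ 2 with hr
  have hrt : Filter.Tendsto (fun α => r α / α) (nhdsWithin 0 (Set.Ioi 0)) (nhds 0) := by
    have hslope : Filter.Tendsto (slope (fun t : ℝ => f (x + ι (t • (-v)))) 0)
        (nhdsWithin 0 (Set.Ioi 0)) (nhds ⟪v, -v⟫) := by
      refine (hasDerivAt_iff_tendsto_slope.mp (hder (-v))).mono_left ?_
      exact nhdsWithin_mono 0 (fun t ht => Set.mem_compl_singleton_iff.mpr (ne_of_gt ht))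
    have htot := hslope.add (tendsto_const_nhds (x := ‖v‖ ^ 2))
    have hval : ⟪v, -v⟫ + ‖v‖ ^ 2 = 0 := by
      rw [inner_neg_right, real_inner_self_eq_norm_sq]; ring
    rw [hval] at htot
    refine htot.congr' ?_
    filter_upwards [self_mem_nhdsWithin] with α (hα : 0 < α)
    simp only [slope_def_field, sub_zero, zero_smul, map_zero, add_zero, smul_neg, neg_zero, hr]
    field_simp
  -- key bound
  have hbound : ∀ α : ℝ, 0 < α → ‖-α⁻¹ • P x α - v‖ ≤ Real.sqrt (2 * (r α / α)) := by
    intro α hα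
    set p := P x α with hp
    have hkey := hP x α hα (-(α • v))
    have hsg := hsub p
    have hnorm : ‖-(α • v)‖ ^ 2 = α ^ 2 * ‖v‖ ^ 2 := by
      rw [norm_neg, norm_smul]
      simp [abs_of_pos hα]
      ring
    have hexp : ‖p + α • v‖ ^ 2 = ‖p‖ ^ 2 + 2 * (α * ⟪v, p⟫) + α ^ 2 * ‖v‖ ^ 2 := by
      rw [norm_add_sq_real, real_inner_smul_right, real_inner_comm, norm_smul]
      simp [abs_of_pos hα]
      ring
    have hineq : ‖p + α • v‖ ^ 2 ≤ 2 * α * r α := by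
      rw [hnorm, ← hp] at hkey
      rw [hexp, hr]
      beta_reduce
      have h2α : (0:ℝ) < 2 * α := by linarith
      nlinarith [mul_le_mul_of_nonneg_right hkey h2α.le,
        div_mul_cancel₀ (‖p‖ ^ 2) h2α.ne', div_mul_cancel₀ (α ^ 2 * ‖v‖ ^ 2) h2α.ne', hsg]
    have heqv : -α⁻¹ • p - v = (-α⁻¹) • (p + α • v) := by
      have : α⁻¹ * α = 1 := inv_mul_cancel₀ hα.ne'
      match_scalars <;> field_simp
    rw [heqv, norm_smul]
    have h1 : ‖(-α⁻¹ : ℝ)‖ = α⁻¹ := by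
      rw [Real.norm_eq_abs, abs_neg, abs_of_pos (inv_pos.mpr hα)]
    rw [h1]
    have hle2 : (α⁻¹ * ‖p + α • v‖) ^ 2 ≤ 2 * (r α / α) := by
      have : (α⁻¹ * ‖p + α • v‖) ^ 2 = ‖p + α • v‖ ^ 2 / α ^ 2 := by
        first
        | (field_simp; ring)
        | field_simp
      rw [this]
      rw [div_le_iff₀ (by positivity)]
      calc ‖p + α • v‖ ^ 2 ≤ 2 * α * r α := hineq
        _ = 2 * (r α / α) * α ^ 2 := by
              first
              | (field_simp; ring)
              | field_simp
    have := Real.sqrt_le_sqrt hle2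
    rwa [Real.sqrt_sq (by positivity)] at this
  -- conclude
  rw [tendsto_iff_norm_sub_tendsto_zero]
  apply squeeze_zero' (f := fun α => ‖-α⁻¹ • P x α - v‖)
    (g := fun α => Real.sqrt (2 * (r α / α)))
  · filter_upwards with α using norm_nonneg _
  · filter_upwards [self_mem_nhdsWithin] with α (hα : 0 < α) using hbound α hα
  · have : Filter.Tendsto (fun α => 2 * (r α / α)) (nhdsWithin 0 (Set.Ioi 0)) (nhds 0) := by
      simpa using hrt.const_mul 2
    have hcont := (Real.continuous_sqrt.tendsto 0).comp this
    simpa [Function.comp_def, Real.sqrt_zero] using hcont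
end

section
/- Let n ∈ ℕ, let U : ℝⁿ → ℝ be twice continuously differentiable, let γ_n be the standard Gaussian measure on ℝⁿ and let ν be the measure with density e^{−U} with respect to γ_n. Let Φ = (Φ₁, …, Φₙ) : ℝⁿ → ℝⁿ be a smooth compactly supported vector field. Then ∫_{ℝⁿ} (div_ν Φ(x))² dν(x) = ∫_{ℝⁿ} |Φ(x)|² dν(x) + Σ_{i,j=1}^n ∫_{ℝⁿ} ∂_j Φ_i(x) ∂_i Φ_j(x) dν(x) + ∫_{ℝⁿ} ⟨D²U(x) Φ(x), Φ(x)⟩ dν(x); consequently ∫_{ℝⁿ} (div_ν Φ)² dν ≤ ∫_{ℝⁿ} |Φ|² dν + ∫_{ℝⁿ} ‖DΦ‖²_F dν + ∫_{ℝⁿ} ⟨D²U Φ, Φ⟩ dν, where ‖DΦ(x)‖²_F = Σ_{i,j=1}^n (∂_j Φ_i(x))² is the squared Frobenius norm of the Jacobian of Φ. -/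
open scoped RealInnerProductSpace
open MeasureTheory
open scoped ContDiff NNReal ENNReal

/-- The standard Gaussian measure `γ_n` on `ℝⁿ`: the measure with density
`(2π)^(−n/2) exp(−|x|²/2)` with respect to Lebesgue measure. -/
noncomputable def stdGaussian (n : ℕ) : Measure (EuclideanSpace ℝ (Fin n)) :=
  volume.withDensity
    (fun x => ENNReal.ofReal ((2 * Real.pi) ^ (-(n : ℝ) / 2) * Real.exp (-‖x‖ ^ 2 / 2)))

/-- The weighted Gaussian measure `ν = e^{−U} γ_n`. -/
noncomputable def weightedGaussian (n : ℕ) (U : EuclideanSpace ℝ (Fin n) → ℝ) :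
    Measure (EuclideanSpace ℝ (Fin n)) :=
  (stdGaussian n).withDensity (fun x => ENNReal.ofReal (Real.exp (-U x)))

/-- The weighted Gaussian divergence
`div_ν Φ(x) = Σᵢ (∂ᵢΦᵢ(x) − Φᵢ(x) ∂ᵢU(x) − Φᵢ(x) xᵢ)`. -/
noncomputable def divNu (n : ℕ) (U : EuclideanSpace ℝ (Fin n) → ℝ)
    (Φ : EuclideanSpace ℝ (Fin n) → EuclideanSpace ℝ (Fin n))
    (x : EuclideanSpace ℝ (Fin n)) : ℝ :=
  ∑ i, (fderiv ℝ (fun y => Φ y i) x (EuclideanSpace.single i (1 : ℝ))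
    - Φ x i * fderiv ℝ U x (EuclideanSpace.single i (1 : ℝ))
    - Φ x i * x i)

noncomputable def rhoWG (n : ℕ) (U : EuclideanSpace ℝ (Fin n) → ℝ)
    (x : EuclideanSpace ℝ (Fin n)) : ℝ :=
  (2 * Real.pi) ^ (-(n : ℝ) / 2) * Real.exp (-(U x + ‖x‖ ^ 2 / 2))

lemma rhoWG_pos {n : ℕ} (U : EuclideanSpace ℝ (Fin n) → ℝ) (x : EuclideanSpace ℝ (Fin n)) :
    0 < rhoWG n U x := by
  unfold rhoWG; positivity

lemma rhoWG_continuous {n : ℕ} {U : EuclideanSpace ℝ (Fin n) → ℝ} (hU : Continuous U) :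
    Continuous (rhoWG n U) := by
  unfold rhoWG
  fun_prop

lemma integral_weightedGaussian {n : ℕ} {U : EuclideanSpace ℝ (Fin n) → ℝ} (hU : Continuous U)
    (f : EuclideanSpace ℝ (Fin n) → ℝ) :
    ∫ x, f x ∂(weightedGaussian n U) = ∫ x, rhoWG n U x * f x := by
  have hmeas : Measurable fun x : EuclideanSpace ℝ (Fin n) => (rhoWG n U x).toNNReal :=
    (continuous_real_toNNReal.comp (rhoWG_continuous hU)).measurable
  have h1 : weightedGaussian n U
      = volume.withDensity (fun x => ((rhoWG n U x).toNNReal : ℝ≥0∞)) := by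
    rw [weightedGaussian, stdGaussian, ← MeasureTheory.withDensity_mul]
    · congr 1
      funext x
      rw [Pi.mul_apply, ← ENNReal.ofReal_mul (by positivity)]
      rw [ENNReal.ofReal, rhoWG]
      congr 2
      rw [mul_assoc, ← Real.exp_add]
      congr 2
      ring
    · fun_prop
    · fun_prop
  rw [h1, integral_withDensity_eq_integral_smul hmeas]
  congr 1
  funext x
  rw [NNReal.smul_def, Real.coe_toNNReal _ (rhoWG_pos U x).le, smul_eq_mul]

lemma hasFDerivAt_rhoWG {n : ℕ} {U : EuclideanSpace ℝ (Fin n) → ℝ} (hU : ContDiff ℝ 2 U)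
    (x : EuclideanSpace ℝ (Fin n)) :
    HasFDerivAt (rhoWG n U)
      ((-(rhoWG n U x)) • (fderiv ℝ U x + innerSL ℝ x)) x := by
  have hUd : HasFDerivAt U (fderiv ℝ U x) x :=
    ((hU.differentiable (by norm_num)) x).hasFDerivAt
  have hns : HasFDerivAt (fun y : EuclideanSpace ℝ (Fin n) => ‖y‖ ^ 2 / 2)
      (innerSL ℝ x) x := by
    have h2 := ((hasStrictFDerivAt_norm_sq x).hasFDerivAt).mul_const (1/2 : ℝ)
    refine (h2.congr_fderiv ?_).congr_of_eventuallyEq (Filter.Eventually.of_forall fun y => ?_)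
    · ext y
      simp [two_smul]
      ring
    · simp only; ring
  have hG : HasFDerivAt (fun y => U y + ‖y‖ ^ 2 / 2) (fderiv ℝ U x + innerSL ℝ x) x :=
    hUd.add hns
  have hexp : HasFDerivAt (fun y => Real.exp (-(U y + ‖y‖ ^ 2 / 2)))
      (Real.exp (-(U x + ‖x‖ ^ 2 / 2)) • (-(fderiv ℝ U x + innerSL ℝ x))) x := hG.neg.exp
  have hfin := hexp.const_mul ((2 * Real.pi) ^ (-(n : ℝ) / 2))
  have hfin' : HasFDerivAt (rhoWG n U) ((2 * Real.pi) ^ (-(n : ℝ) / 2) •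
      Real.exp (-(U x + ‖x‖ ^ 2 / 2)) • (-(fderiv ℝ U x + innerSL ℝ x))) x := hfin
  refine hfin'.congr_fderiv ?_
  ext y
  simp only [ContinuousLinearMap.smul_apply, ContinuousLinearMap.neg_apply, smul_eq_mul, rhoWG]
  ring

lemma contDiff_rhoWG {n : ℕ} {U : EuclideanSpace ℝ (Fin n) → ℝ} (hU : ContDiff ℝ 2 U) :
    ContDiff ℝ 1 (rhoWG n U) := by
  unfold rhoWG
  exact contDiff_const.mul (((hU.of_le (by norm_num)).add
    ((contDiff_norm_sq ℝ).div_const 2)).neg.exp)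

lemma cont_fderiv_apply {n : ℕ} {g : EuclideanSpace ℝ (Fin n) → ℝ} (hg : ContDiff ℝ 1 g)
    (v : EuclideanSpace ℝ (Fin n)) : Continuous fun x => fderiv ℝ g x v :=
  ((ContinuousLinearMap.apply ℝ ℝ v).continuous).comp (hg.continuous_fderiv one_ne_zero)

lemma hcs_fderiv_apply {n : ℕ} {g : EuclideanSpace ℝ (Fin n) → ℝ} (hgs : HasCompactSupport g)
    (v : EuclideanSpace ℝ (Fin n)) : HasCompactSupport fun x => fderiv ℝ g x v :=
  hgs.fderiv_apply ℝ v

lemma ibpWG {n : ℕ} {U : EuclideanSpace ℝ (Fin n) → ℝ} (hU : ContDiff ℝ 2 U)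
    {g : EuclideanSpace ℝ (Fin n) → ℝ} (hg : ContDiff ℝ 1 g) (hgs : HasCompactSupport g)
    (i : Fin n) :
    ∫ x, rhoWG n U x * fderiv ℝ g x (EuclideanSpace.single i 1)
      = ∫ x, rhoWG n U x * (g x * (fderiv ℝ U x (EuclideanSpace.single i 1) + x i)) := by
  set v : EuclideanSpace ℝ (Fin n) := EuclideanSpace.single i 1 with hv
  have hUc : Continuous U := hU.continuous
  have hρc : Continuous (rhoWG n U) := rhoWG_continuous hUc
  have hρd : Differentiable ℝ (rhoWG n U) := fun x => (hasFDerivAt_rhoWG hU x).differentiableAt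
  have hρfd : ∀ x, fderiv ℝ (rhoWG n U) x v
      = -(rhoWG n U x) * (fderiv ℝ U x v + x i) := by
    intro x
    rw [(hasFDerivAt_rhoWG hU x).fderiv]
    simp [hv, EuclideanSpace.inner_single_right, real_inner_comm]
    ring
  have h1 : Integrable (fun x => fderiv ℝ g x v * rhoWG n U x) :=
    (((cont_fderiv_apply hg v).mul hρc).integrable_of_hasCompactSupport
      ((hcs_fderiv_apply hgs v).mul_right))
  have h2 : Integrable (fun x => g x * fderiv ℝ (rhoWG n U) x v) :=
    ((hg.continuous.mul (cont_fderiv_apply (contDiff_rhoWG hU) v)).integrable_of_hasCompactSupport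
      hgs.mul_right)
  have h3 : Integrable (fun x => g x * rhoWG n U x) :=
    ((hg.continuous.mul hρc).integrable_of_hasCompactSupport hgs.mul_right)
  calc ∫ x, rhoWG n U x * fderiv ℝ g x v
      = ∫ x, fderiv ℝ g x v * rhoWG n U x := by congr 1; funext x; ring
    _ = -∫ x, g x * fderiv ℝ (rhoWG n U) x v := by
        rw [integral_mul_fderiv_eq_neg_fderiv_mul_of_integrable h1 h2 h3
          (fun x _ => hg.differentiable one_ne_zero x) (fun x _ => hρd x), neg_neg]
    _ = ∫ x, rhoWG n U x * (g x * (fderiv ℝ U x v + x i)) := by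
        rw [← integral_neg]
        congr 1; funext x
        rw [hρfd x]; ring

section Main

variable {n : ℕ} {U : EuclideanSpace ℝ (Fin n) → ℝ}
  {Φ : EuclideanSpace ℝ (Fin n) → EuclideanSpace ℝ (Fin n)}

local notation "E'" => EuclideanSpace ℝ (Fin n)
local notation "e" i => EuclideanSpace.single i (1 : ℝ)

lemma phi_comp_contDiff (hΦ : ContDiff ℝ (⊤ : ℕ∞) Φ) (i : Fin n) :
    ContDiff ℝ 2 (fun y : E' => Φ y i) :=
  ((EuclideanSpace.proj (𝕜 := ℝ) i).contDiff.comp hΦ).of_le (by exact WithTop.coe_le_coe.mpr le_top)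

lemma phi_comp_support (hΦs : HasCompactSupport Φ) (i : Fin n) :
    HasCompactSupport (fun y : E' => Φ y i) :=
  hΦs.comp_left (g := fun v : E' => v i) rfl

lemma A_contDiff (hΦ : ContDiff ℝ (⊤ : ℕ∞) Φ) (i j : Fin n) :
    ContDiff ℝ 1 (fun x : E' => fderiv ℝ (fun y => Φ y i) x (e j)) :=
  ((phi_comp_contDiff hΦ i).fderiv_right (by norm_num)).clm_apply contDiff_const

lemma A_support (hΦs : HasCompactSupport Φ) (i j : Fin n) :
    HasCompactSupport (fun x : E' => fderiv ℝ (fun y => Φ y i) x (e j)) :=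
  (phi_comp_support hΦs i).fderiv_apply ℝ _

lemma coord_contDiff (i : Fin n) : ContDiff ℝ 1 (fun x : E' => x i) :=
  (EuclideanSpace.proj (𝕜 := ℝ) i).contDiff

lemma dU_contDiff (hU : ContDiff ℝ 2 U) (i : Fin n) :
    ContDiff ℝ 1 (fun x : E' => fderiv ℝ U x (e i)) :=
  (hU.fderiv_right (by norm_num)).clm_apply contDiff_const

lemma divNu_contDiff (hU : ContDiff ℝ 2 U) (hΦ : ContDiff ℝ (⊤ : ℕ∞) Φ) :
    ContDiff ℝ 1 (divNu n U Φ) := by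
  unfold divNu
  exact ContDiff.sum fun i _ =>
    ((A_contDiff hΦ i i).sub ((((EuclideanSpace.proj (𝕜 := ℝ) i).contDiff.comp hΦ).of_le
      (by simp)).mul (dU_contDiff hU i))).sub
      ((((EuclideanSpace.proj (𝕜 := ℝ) i).contDiff.comp hΦ).of_le (by simp)).mul
        (coord_contDiff i))

lemma divNu_support (hΦs : HasCompactSupport Φ) : HasCompactSupport (divNu n U Φ) := by
  apply HasCompactSupport.intro hΦs (fun x hx => ?_)
  have h0 : Φ x = 0 := image_eq_zero_of_notMem_tsupport hx
  have hA : ∀ i : Fin n, fderiv ℝ (fun y => Φ y i) x = 0 := by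
    intro i
    apply image_eq_zero_of_notMem_tsupport
    intro hmem
    exact hx (closure_mono (Function.support_subset_iff.2 fun y hy => by
      intro h0y; exact hy (by rw [h0y]; rfl)) ((tsupport_fderiv_subset ℝ) hmem))
  unfold divNu
  apply Finset.sum_eq_zero
  intro i _
  rw [hA i]
  have : Φ x i = 0 := by rw [h0]; rfl
  simp [this]

lemma fderiv_fderiv_apply {f : E' → ℝ} {x : E'} (hd : DifferentiableAt ℝ (fderiv ℝ f) x)
    (v w : E') :
    fderiv ℝ (fun y => fderiv ℝ f y v) x w = fderiv ℝ (fderiv ℝ f) x w v := by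
  have h := (hd.hasFDerivAt.clm_apply (hasFDerivAt_const v x)).fderiv
  rw [h]
  simp

lemma euclid_decomp (w : E') : w = ∑ i, w i • EuclideanSpace.single i (1 : ℝ) := by
  have h := (EuclideanSpace.basisFun (Fin n) ℝ).sum_repr w
  simpa [EuclideanSpace.basisFun_apply, EuclideanSpace.basisFun_repr] using h.symm

lemma bilin_expand (B : E' →L[ℝ] E' →L[ℝ] ℝ) (v w : E') :
    B v w = ∑ i, ∑ j, v i * w j *
      B (EuclideanSpace.single i (1 : ℝ)) (EuclideanSpace.single j (1 : ℝ)) := by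
  have hv := euclid_decomp v
  have hw := euclid_decomp w
  calc B v w
      = B (∑ i, v i • EuclideanSpace.single i (1:ℝ)) (∑ j, w j • EuclideanSpace.single j (1:ℝ)) := by
        rw [← hv, ← hw]
    _ = ∑ i, ∑ j, v i * w j *
      B (EuclideanSpace.single i (1 : ℝ)) (EuclideanSpace.single j (1 : ℝ)) := by
      simp only [map_sum, _root_.map_smul, ContinuousLinearMap.sum_apply,
        ContinuousLinearMap.smul_apply, smul_eq_mul, Finset.mul_sum]
      rw [Finset.sum_comm]
      refine Finset.sum_congr rfl fun i _ => Finset.sum_congr rfl fun j _ => ?_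
      ring

lemma euclid_norm_sq (w : E') : ‖w‖ ^ 2 = ∑ i, (w i) ^ 2 := by
  rw [EuclideanSpace.norm_eq, Real.sq_sqrt (by positivity)]
  simp [Real.norm_eq_abs, sq_abs]

lemma divNu_hasFDerivAt (hU : ContDiff ℝ 2 U) (hΦ : ContDiff ℝ (⊤ : ℕ∞) Φ) (x : E') :
    HasFDerivAt (divNu n U Φ)
      (∑ i, ((fderiv ℝ (fderiv ℝ (fun y => Φ y i)) x).flip (EuclideanSpace.single i (1:ℝ))
        - (Φ x i • (fderiv ℝ (fderiv ℝ U) x).flip (EuclideanSpace.single i (1:ℝ))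
            + fderiv ℝ U x (EuclideanSpace.single i (1:ℝ)) • fderiv ℝ (fun y => Φ y i) x)
        - (Φ x i • (EuclideanSpace.proj i : E' →L[ℝ] ℝ)
            + x i • fderiv ℝ (fun y => Φ y i) x))) x := by
  unfold divNu
  apply HasFDerivAt.fun_sum
  intro i _
  have hdΦ : DifferentiableAt ℝ (fderiv ℝ (fun y => Φ y i)) x :=
    (((phi_comp_contDiff hΦ i).fderiv_right (m := 1) (by norm_num)).differentiable one_ne_zero) x
  have hdU : DifferentiableAt ℝ (fderiv ℝ U) x :=
    ((hU.fderiv_right (m := 1) (by norm_num)).differentiable one_ne_zero) x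
  have hΦi : HasFDerivAt (fun y => Φ y i) (fderiv ℝ (fun y => Φ y i) x) x :=
    (((phi_comp_contDiff hΦ i).differentiable (by norm_num)) x).hasFDerivAt
  have h1 : HasFDerivAt (fun y => fderiv ℝ (fun z => Φ z i) y (EuclideanSpace.single i (1:ℝ)))
      ((fderiv ℝ (fderiv ℝ (fun y => Φ y i)) x).flip (EuclideanSpace.single i (1:ℝ))) x := by
    simpa using hdΦ.hasFDerivAt.clm_apply (hasFDerivAt_const (EuclideanSpace.single i (1:ℝ)) x)
  have h2 : HasFDerivAt (fun y => fderiv ℝ U y (EuclideanSpace.single i (1:ℝ)))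
      ((fderiv ℝ (fderiv ℝ U) x).flip (EuclideanSpace.single i (1:ℝ))) x := by
    simpa using hdU.hasFDerivAt.clm_apply (hasFDerivAt_const (EuclideanSpace.single i (1:ℝ)) x)
  have h3 : HasFDerivAt (fun y : E' => y i) (EuclideanSpace.proj (𝕜 := ℝ) i) x :=
    (EuclideanSpace.proj (𝕜 := ℝ) i).hasFDerivAt
  exact (h1.sub (hΦi.mul h2)).sub (hΦi.mul h3)

lemma divNu_fderiv_apply (hU : ContDiff ℝ 2 U) (hΦ : ContDiff ℝ (⊤ : ℕ∞) Φ) (x : E') (j : Fin n) :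
    fderiv ℝ (divNu n U Φ) x (EuclideanSpace.single j (1:ℝ))
      = ∑ i, (fderiv ℝ (fderiv ℝ (fun y => Φ y i)) x (EuclideanSpace.single j (1:ℝ))
            (EuclideanSpace.single i (1:ℝ))
        - (Φ x i * fderiv ℝ (fderiv ℝ U) x (EuclideanSpace.single j (1:ℝ))
              (EuclideanSpace.single i (1:ℝ))
            + fderiv ℝ U x (EuclideanSpace.single i (1:ℝ))
              * fderiv ℝ (fun y => Φ y i) x (EuclideanSpace.single j (1:ℝ)))
        - (Φ x i * (if j = i then (1:ℝ) else 0)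
            + x i * fderiv ℝ (fun y => Φ y i) x (EuclideanSpace.single j (1:ℝ)))) := by
  rw [(divNu_hasFDerivAt hU hΦ x).fderiv, ContinuousLinearMap.sum_apply]
  refine Finset.sum_congr rfl fun i _ => ?_
  simp [ContinuousLinearMap.flip_apply, EuclideanSpace.single_apply, smul_eq_mul, eq_comm]

lemma fderiv_mul_apply {f g : E' → ℝ} {x : E'} (hf : DifferentiableAt ℝ f x)
    (hg : DifferentiableAt ℝ g x) (v : E') :
    fderiv ℝ (fun y => f y * g y) x v = f x * fderiv ℝ g x v + g x * fderiv ℝ f x v := by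
  rw [fderiv_fun_mul hf hg]
  simp [smul_eq_mul]

lemma Pcongr {f g : E' → ℝ} (h : ∀ x, f x = g x) : ∫ x, f x = ∫ x, g x := by
  congr 1
  funext x
  exact h x

lemma phi_cont (hΦ : ContDiff ℝ (⊤ : ℕ∞) Φ) (i : Fin n) : Continuous fun x : E' => Φ x i :=
  (phi_comp_contDiff hΦ i).continuous

lemma phi_diff (hΦ : ContDiff ℝ (⊤ : ℕ∞) Φ) (i : Fin n) : Differentiable ℝ fun x : E' => Φ x i :=
  (phi_comp_contDiff hΦ i).differentiable (by norm_num)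

lemma A_cont (hΦ : ContDiff ℝ (⊤ : ℕ∞) Φ) (i j : Fin n) :
    Continuous fun x : E' => fderiv ℝ (fun y => Φ y i) x (EuclideanSpace.single j (1:ℝ)) :=
  (A_contDiff hΦ i j).continuous

lemma BPhi_cont (hΦ : ContDiff ℝ (⊤ : ℕ∞) Φ) (i : Fin n) (v w : E') :
    Continuous fun x => fderiv ℝ (fderiv ℝ fun y => Φ y i) x v w :=
  (((((phi_comp_contDiff hΦ i).fderiv_right (m := 1) (by norm_num)).continuous_fderiv
    one_ne_zero).clm_apply continuous_const).clm_apply continuous_const)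

lemma BU_cont (hU : ContDiff ℝ 2 U) (v w : E') :
    Continuous fun x => fderiv ℝ (fderiv ℝ U) x v w :=
  ((((hU.fderiv_right (m := 1) (by norm_num)).continuous_fderiv
    one_ne_zero).clm_apply continuous_const).clm_apply continuous_const)

lemma dU_cont (hU : ContDiff ℝ 2 U) (i : Fin n) :
    Continuous fun x : E' => fderiv ℝ U x (EuclideanSpace.single i (1:ℝ)) :=
  (dU_contDiff hU i).continuous

lemma keyInt (hU : ContDiff ℝ 2 U) {f : E' → ℝ} (hf : Continuous f)
    (hs : HasCompactSupport f) : Integrable (fun x => rhoWG n U x * f x) volume :=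
  ((rhoWG_continuous hU.continuous).mul hf).integrable_of_hasCompactSupport hs.mul_left

lemma stepD (hU : ContDiff ℝ 2 U) (hΦ : ContDiff ℝ (⊤ : ℕ∞) Φ) (hΦs : HasCompactSupport Φ)
    (i j : Fin n) :
    (∫ x, rhoWG n U x * (fderiv ℝ (fun y => Φ y i) x (EuclideanSpace.single j (1:ℝ))
          * fderiv ℝ (fun y => Φ y j) x (EuclideanSpace.single i (1:ℝ))))
      = (∫ x, rhoWG n U x * (Φ x j * (fderiv ℝ (fun y => Φ y i) x (EuclideanSpace.single j (1:ℝ))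
            * (fderiv ℝ U x (EuclideanSpace.single i (1:ℝ)) + x i))))
        - ∫ x, rhoWG n U x * (Φ x j * fderiv ℝ (fderiv ℝ (fun y => Φ y i)) x
            (EuclideanSpace.single j (1:ℝ)) (EuclideanSpace.single i (1:ℝ))) := by
  have hg : ContDiff ℝ 1 fun x : E' =>
      Φ x j * fderiv ℝ (fun y => Φ y i) x (EuclideanSpace.single j (1:ℝ)) :=
    (((phi_comp_contDiff hΦ j).of_le (by norm_num)).mul (A_contDiff hΦ i j))
  have hgs : HasCompactSupport fun x : E' =>
      Φ x j * fderiv ℝ (fun y => Φ y i) x (EuclideanSpace.single j (1:ℝ)) :=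
    (A_support hΦs i j).mul_left
  have h := ibpWG hU hg hgs i
  have hpt : ∀ x : E', fderiv ℝ (fun y =>
        Φ y j * fderiv ℝ (fun z => Φ z i) y (EuclideanSpace.single j (1:ℝ))) x
        (EuclideanSpace.single i (1:ℝ))
      = Φ x j * fderiv ℝ (fderiv ℝ (fun y => Φ y i)) x
          (EuclideanSpace.single j (1:ℝ)) (EuclideanSpace.single i (1:ℝ))
        + fderiv ℝ (fun y => Φ y i) x (EuclideanSpace.single j (1:ℝ))
          * fderiv ℝ (fun y => Φ y j) x (EuclideanSpace.single i (1:ℝ)) := by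
    intro x
    rw [fderiv_mul_apply (phi_diff hΦ j x) ((A_contDiff hΦ i j).differentiable one_ne_zero x)]
    congr 2
    rw [fderiv_fderiv_apply
      ((((phi_comp_contDiff hΦ i).fderiv_right (m := 1) (by norm_num)).differentiable one_ne_zero) x)]
    exact ((phi_comp_contDiff hΦ i).contDiffAt.isSymmSndFDerivAt (by simp [minSmoothness_of_isRCLikeNormedField])).eq _ _
  rw [Pcongr (fun x => by rw [hpt x, mul_add] :
    ∀ x : E', rhoWG n U x * fderiv ℝ (fun y =>
        Φ y j * fderiv ℝ (fun z => Φ z i) y (EuclideanSpace.single j (1:ℝ))) x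
        (EuclideanSpace.single i (1:ℝ))
      = rhoWG n U x * (Φ x j * fderiv ℝ (fderiv ℝ (fun y => Φ y i)) x
          (EuclideanSpace.single j (1:ℝ)) (EuclideanSpace.single i (1:ℝ)))
        + rhoWG n U x * (fderiv ℝ (fun y => Φ y i) x (EuclideanSpace.single j (1:ℝ))
          * fderiv ℝ (fun y => Φ y j) x (EuclideanSpace.single i (1:ℝ)))),
    integral_add
      (keyInt hU ((phi_cont hΦ j).fun_mul (BPhi_cont hΦ i _ _)) (phi_comp_support hΦs j).mul_right)
      (keyInt hU ((A_cont hΦ i j).fun_mul (A_cont hΦ j i)) (A_support hΦs i j).mul_right),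
    Pcongr (fun x => by ring :
      ∀ x : E', rhoWG n U x * (Φ x j * fderiv ℝ (fun y => Φ y i) x
          (EuclideanSpace.single j (1:ℝ)) * (fderiv ℝ U x (EuclideanSpace.single i (1:ℝ)) + x i))
        = rhoWG n U x * (Φ x j * (fderiv ℝ (fun y => Φ y i) x (EuclideanSpace.single j (1:ℝ))
            * (fderiv ℝ U x (EuclideanSpace.single i (1:ℝ)) + x i))))] at h
  linarith [h]

lemma divNu_cont (hU : ContDiff ℝ 2 U) (hΦ : ContDiff ℝ (⊤ : ℕ∞) Φ) : Continuous (divNu n U Φ) :=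
  (divNu_contDiff hU hΦ).continuous

lemma stepA (hU : ContDiff ℝ 2 U) (hΦ : ContDiff ℝ (⊤ : ℕ∞) Φ) (hΦs : HasCompactSupport Φ)
    (j : Fin n) :
    (∫ x, rhoWG n U x * (Φ x j * fderiv ℝ (divNu n U Φ) x (EuclideanSpace.single j (1:ℝ))))
      + (∫ x, rhoWG n U x * (fderiv ℝ (fun y => Φ y j) x (EuclideanSpace.single j (1:ℝ))
          * divNu n U Φ x))
      = ∫ x, rhoWG n U x * (Φ x j * divNu n U Φ x
          * (fderiv ℝ U x (EuclideanSpace.single j (1:ℝ)) + x j)) := by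
  have hg : ContDiff ℝ 1 fun x : E' => Φ x j * divNu n U Φ x :=
    ((phi_comp_contDiff hΦ j).of_le (by norm_num)).mul (divNu_contDiff hU hΦ)
  have hgs : HasCompactSupport fun x : E' => Φ x j * divNu n U Φ x :=
    (divNu_support hΦs).mul_left
  have h := ibpWG hU hg hgs j
  have hpt : ∀ x : E', fderiv ℝ (fun y => Φ y j * divNu n U Φ y) x
        (EuclideanSpace.single j (1:ℝ))
      = Φ x j * fderiv ℝ (divNu n U Φ) x (EuclideanSpace.single j (1:ℝ))
        + divNu n U Φ x * fderiv ℝ (fun y => Φ y j) x (EuclideanSpace.single j (1:ℝ)) :=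
    fun x => fderiv_mul_apply (phi_diff hΦ j x)
      ((divNu_contDiff hU hΦ).differentiable one_ne_zero x) _
  rw [Pcongr (fun x => by rw [hpt x, mul_add] :
    ∀ x : E', rhoWG n U x * fderiv ℝ (fun y => Φ y j * divNu n U Φ y) x
        (EuclideanSpace.single j (1:ℝ))
      = rhoWG n U x * (Φ x j * fderiv ℝ (divNu n U Φ) x (EuclideanSpace.single j (1:ℝ)))
        + rhoWG n U x * (divNu n U Φ x
            * fderiv ℝ (fun y => Φ y j) x (EuclideanSpace.single j (1:ℝ)))),
    integral_add
      (keyInt hU ((phi_cont hΦ j).fun_mul (cont_fderiv_apply (divNu_contDiff hU hΦ) _))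
        (phi_comp_support hΦs j).mul_right)
      (keyInt hU ((divNu_cont hU hΦ).fun_mul (A_cont hΦ j j)) (divNu_support hΦs).mul_right),
    Pcongr (fun x => by ring :
      ∀ x : E', rhoWG n U x * (divNu n U Φ x
            * fderiv ℝ (fun y => Φ y j) x (EuclideanSpace.single j (1:ℝ)))
        = rhoWG n U x * (fderiv ℝ (fun y => Φ y j) x (EuclideanSpace.single j (1:ℝ))
            * divNu n U Φ x)),
    Pcongr (fun x => by ring :
      ∀ x : E', rhoWG n U x * (Φ x j * divNu n U Φ x
          * (fderiv ℝ U x (EuclideanSpace.single j (1:ℝ)) + x j))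
        = rhoWG n U x * (Φ x j * divNu n U Φ x
          * (fderiv ℝ U x (EuclideanSpace.single j (1:ℝ)) + x j)))] at h
  exact h

lemma stepB (hU : ContDiff ℝ 2 U) (hΦ : ContDiff ℝ (⊤ : ℕ∞) Φ) (hΦs : HasCompactSupport Φ) :
    ∫ x, rhoWG n U x * (divNu n U Φ x) ^ 2
      = ∑ j, ((∫ x, rhoWG n U x * (fderiv ℝ (fun y => Φ y j) x (EuclideanSpace.single j (1:ℝ))
            * divNu n U Φ x))
          - ∫ x, rhoWG n U x * (Φ x j * divNu n U Φ x
              * (fderiv ℝ U x (EuclideanSpace.single j (1:ℝ)) + x j))) := by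
  have hpt : ∀ x : E', rhoWG n U x * (divNu n U Φ x) ^ 2
      = ∑ j, (rhoWG n U x * (fderiv ℝ (fun y => Φ y j) x (EuclideanSpace.single j (1:ℝ))
            * divNu n U Φ x)
          - rhoWG n U x * (Φ x j * divNu n U Φ x
              * (fderiv ℝ U x (EuclideanSpace.single j (1:ℝ)) + x j))) := by
    intro x
    have e1 : (divNu n U Φ x) ^ 2
        = (∑ j, (fderiv ℝ (fun y => Φ y j) x (EuclideanSpace.single j (1:ℝ))
            - Φ x j * fderiv ℝ U x (EuclideanSpace.single j (1:ℝ))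
            - Φ x j * x j)) * divNu n U Φ x := by
      rw [pow_two]
      rfl
    rw [e1, Finset.sum_mul, Finset.mul_sum]
    exact Finset.sum_congr rfl fun j _ => by ring
  rw [Pcongr hpt]
  refine (integral_finset_sum _ (fun j _ => ?_)).trans
    (Finset.sum_congr rfl fun j _ => integral_sub ?_ ?_)
  · exact (keyInt hU ((A_cont hΦ j j).mul (divNu_cont hU hΦ)) (A_support hΦs j j).mul_right).sub
      (keyInt hU (((phi_cont hΦ j).mul (divNu_cont hU hΦ)).mul
          ((dU_cont hU j).add (coord_contDiff j).continuous))
        ((phi_comp_support hΦs j).mul_right).mul_right)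
  · exact keyInt hU ((A_cont hΦ j j).mul (divNu_cont hU hΦ)) (A_support hΦs j j).mul_right
  · exact keyInt hU (((phi_cont hΦ j).mul (divNu_cont hU hΦ)).mul
        ((dU_cont hU j).add (coord_contDiff j).continuous))
      ((phi_comp_support hΦs j).mul_right).mul_right

lemma integral_ABCD {A B C D : E' → ℝ} (hA : Integrable A volume) (hB : Integrable B volume)
    (hC : Integrable C volume) (hD : Integrable D volume) :
    ∫ x, (A x - B x + C x + D x)
      = (((∫ x, A x) - ∫ x, B x) + ∫ x, C x) + ∫ x, D x := by
  calc ∫ x, (A x - B x + C x + D x)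
      = (∫ x, (A x - B x + C x)) + ∫ x, D x := integral_add ((hA.sub hB).add hC) hD
    _ = ((∫ x, (A x - B x)) + ∫ x, C x) + ∫ x, D x :=
        congrArg (· + ∫ x, D x) (integral_add (hA.sub hB) hC)
    _ = (((∫ x, A x) - ∫ x, B x) + ∫ x, C x) + ∫ x, D x :=
        congrArg (fun t => (t + ∫ x, C x) + ∫ x, D x) (integral_sub hA hB)

lemma stepC (hU : ContDiff ℝ 2 U) (hΦ : ContDiff ℝ (⊤ : ℕ∞) Φ) (hΦs : HasCompactSupport Φ)
    (j : Fin n) :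
    -(∫ x, rhoWG n U x * (Φ x j * fderiv ℝ (divNu n U Φ) x (EuclideanSpace.single j (1:ℝ))))
      = ∑ i, (((∫ x, rhoWG n U x * (Φ x j
              * (fderiv ℝ (fun y => Φ y i) x (EuclideanSpace.single j (1:ℝ))
                * (fderiv ℝ U x (EuclideanSpace.single i (1:ℝ)) + x i))))
          - ∫ x, rhoWG n U x * (Φ x j * fderiv ℝ (fderiv ℝ (fun y => Φ y i)) x
              (EuclideanSpace.single j (1:ℝ)) (EuclideanSpace.single i (1:ℝ))))
        + (∫ x, rhoWG n U x * (Φ x j * (Φ x i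
            * fderiv ℝ (fderiv ℝ U) x (EuclideanSpace.single j (1:ℝ))
                (EuclideanSpace.single i (1:ℝ)))))
        + (if j = i then ∫ x, rhoWG n U x * (Φ x j * Φ x i) else 0)) := by
  have hpt : ∀ x : E',
      -(rhoWG n U x * (Φ x j * fderiv ℝ (divNu n U Φ) x (EuclideanSpace.single j (1:ℝ))))
      = ∑ i, ((rhoWG n U x * (Φ x j
              * (fderiv ℝ (fun y => Φ y i) x (EuclideanSpace.single j (1:ℝ))
                * (fderiv ℝ U x (EuclideanSpace.single i (1:ℝ)) + x i)))
          - rhoWG n U x * (Φ x j * fderiv ℝ (fderiv ℝ (fun y => Φ y i)) x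
              (EuclideanSpace.single j (1:ℝ)) (EuclideanSpace.single i (1:ℝ))))
        + rhoWG n U x * (Φ x j * (Φ x i
            * fderiv ℝ (fderiv ℝ U) x (EuclideanSpace.single j (1:ℝ))
                (EuclideanSpace.single i (1:ℝ))))
        + rhoWG n U x * (Φ x j * (Φ x i * (if j = i then (1:ℝ) else 0)))) := by
    intro x
    rw [divNu_fderiv_apply hU hΦ x j, Finset.mul_sum, Finset.mul_sum, ← Finset.sum_neg_distrib]
    exact Finset.sum_congr rfl fun i _ => by ring
  have kA : ∀ i : Fin n, Integrable (fun x => rhoWG n U x * (Φ x j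
      * (fderiv ℝ (fun y => Φ y i) x (EuclideanSpace.single j (1:ℝ))
        * (fderiv ℝ U x (EuclideanSpace.single i (1:ℝ)) + x i)))) volume := fun i =>
    keyInt hU ((phi_cont hΦ j).mul ((A_cont hΦ i j).mul
      ((dU_cont hU i).add (coord_contDiff i).continuous)))
      (phi_comp_support hΦs j).mul_right
  have kB : ∀ i : Fin n, Integrable (fun x => rhoWG n U x
      * (Φ x j * fderiv ℝ (fderiv ℝ (fun y => Φ y i)) x
          (EuclideanSpace.single j (1:ℝ)) (EuclideanSpace.single i (1:ℝ)))) volume := fun i =>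
    keyInt hU ((phi_cont hΦ j).mul (BPhi_cont hΦ i _ _)) (phi_comp_support hΦs j).mul_right
  have kC : ∀ i : Fin n, Integrable (fun x => rhoWG n U x * (Φ x j * (Φ x i
      * fderiv ℝ (fderiv ℝ U) x (EuclideanSpace.single j (1:ℝ))
          (EuclideanSpace.single i (1:ℝ))))) volume := fun i =>
    keyInt hU ((phi_cont hΦ j).mul ((phi_cont hΦ i).mul (BU_cont hU _ _)))
      (phi_comp_support hΦs j).mul_right
  have kD : ∀ i : Fin n, Integrable (fun x => rhoWG n U x
      * (Φ x j * (Φ x i * (if j = i then (1:ℝ) else 0)))) volume := fun i =>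
    keyInt hU ((phi_cont hΦ j).mul ((phi_cont hΦ i).mul continuous_const))
      (phi_comp_support hΦs j).mul_right
  rw [← integral_neg, Pcongr hpt]
  refine (integral_finset_sum _ (fun i _ => ((((kA i).sub (kB i)).add (kC i)).add (kD i)))).trans
    (Finset.sum_congr rfl fun i _ => ?_)
  refine (integral_ABCD (kA i) (kB i) (kC i) (kD i)).trans ?_
  congr 1
  by_cases h : j = i
  · simp only [if_pos h]
    exact Pcongr fun x => by ring
  · simp only [if_neg h]
    rw [Pcongr (fun x => by ring :
      ∀ x : E', rhoWG n U x * (Φ x j * (Φ x i * (0:ℝ))) = 0)]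
    exact integral_zero E' ℝ

lemma main_eq (hU : ContDiff ℝ 2 U) (hΦ : ContDiff ℝ (⊤ : ℕ∞) Φ) (hΦs : HasCompactSupport Φ) :
    ∫ x, rhoWG n U x * (divNu n U Φ x) ^ 2
      = (∫ x, rhoWG n U x * ‖Φ x‖ ^ 2)
        + (∑ i, ∑ j, ∫ x, rhoWG n U x *
            (fderiv ℝ (fun y => Φ y i) x (EuclideanSpace.single j (1:ℝ))
              * fderiv ℝ (fun y => Φ y j) x (EuclideanSpace.single i (1:ℝ))))
        + ∫ x, rhoWG n U x * fderiv ℝ (fderiv ℝ U) x (Φ x) (Φ x) := by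
  classical
  have kBU : ∀ j i : Fin n, Integrable (fun x => rhoWG n U x * (Φ x j * (Φ x i
      * fderiv ℝ (fderiv ℝ U) x (EuclideanSpace.single j (1:ℝ))
          (EuclideanSpace.single i (1:ℝ))))) volume := fun j i =>
    keyInt hU ((phi_cont hΦ j).mul ((phi_cont hΦ i).mul (BU_cont hU _ _)))
      (phi_comp_support hΦs j).mul_right
  have hT2 : ∫ x, rhoWG n U x * fderiv ℝ (fderiv ℝ U) x (Φ x) (Φ x)
      = ∑ j, ∑ i, ∫ x, rhoWG n U x * (Φ x j * (Φ x i
          * fderiv ℝ (fderiv ℝ U) x (EuclideanSpace.single j (1:ℝ))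
              (EuclideanSpace.single i (1:ℝ)))) := by
    rw [Pcongr (fun x => by
      rw [bilin_expand (fderiv ℝ (fderiv ℝ U) x) (Φ x) (Φ x), Finset.mul_sum]
      refine Finset.sum_congr rfl fun j _ => ?_
      rw [Finset.mul_sum]
      exact Finset.sum_congr rfl fun i _ => by ring :
      ∀ x : E', rhoWG n U x * fderiv ℝ (fderiv ℝ U) x (Φ x) (Φ x)
        = ∑ j, ∑ i, rhoWG n U x * (Φ x j * (Φ x i
            * fderiv ℝ (fderiv ℝ U) x (EuclideanSpace.single j (1:ℝ))
                (EuclideanSpace.single i (1:ℝ)))))]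
    refine (integral_finset_sum _ fun j _ => integrable_finset_sum _ fun i _ => kBU j i).trans
      (Finset.sum_congr rfl fun j _ => integral_finset_sum _ fun i _ => kBU j i)
  have hT3 : ∑ j : Fin n, (∫ x, rhoWG n U x * (Φ x j * Φ x j))
      = ∫ x, rhoWG n U x * ‖Φ x‖ ^ 2 := by
    rw [Pcongr (fun x => by
      rw [euclid_norm_sq (Φ x), Finset.mul_sum]
      exact Finset.sum_congr rfl fun j _ => by ring :
      ∀ x : E', rhoWG n U x * ‖Φ x‖ ^ 2 = ∑ j, rhoWG n U x * (Φ x j * Φ x j))]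
    exact (integral_finset_sum _ fun j _ =>
      keyInt hU ((phi_cont hΦ j).mul (phi_cont hΦ j))
        (phi_comp_support hΦs j).mul_right).symm
  calc ∫ x, rhoWG n U x * (divNu n U Φ x) ^ 2
      = ∑ j, ((∫ x, rhoWG n U x * (fderiv ℝ (fun y => Φ y j) x (EuclideanSpace.single j (1:ℝ))
            * divNu n U Φ x))
          - ∫ x, rhoWG n U x * (Φ x j * divNu n U Φ x
              * (fderiv ℝ U x (EuclideanSpace.single j (1:ℝ)) + x j))) := stepB hU hΦ hΦs
    _ = ∑ j, -(∫ x, rhoWG n U x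
          * (Φ x j * fderiv ℝ (divNu n U Φ) x (EuclideanSpace.single j (1:ℝ)))) :=
        Finset.sum_congr rfl fun j _ => by linarith [stepA hU hΦ hΦs j]
    _ = ∑ j, ∑ i, (((∫ x, rhoWG n U x * (Φ x j
              * (fderiv ℝ (fun y => Φ y i) x (EuclideanSpace.single j (1:ℝ))
                * (fderiv ℝ U x (EuclideanSpace.single i (1:ℝ)) + x i))))
          - ∫ x, rhoWG n U x * (Φ x j * fderiv ℝ (fderiv ℝ (fun y => Φ y i)) x
              (EuclideanSpace.single j (1:ℝ)) (EuclideanSpace.single i (1:ℝ))))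
        + (∫ x, rhoWG n U x * (Φ x j * (Φ x i
            * fderiv ℝ (fderiv ℝ U) x (EuclideanSpace.single j (1:ℝ))
                (EuclideanSpace.single i (1:ℝ)))))
        + (if j = i then ∫ x, rhoWG n U x * (Φ x j * Φ x i) else 0)) :=
        Finset.sum_congr rfl fun j _ => stepC hU hΦ hΦs j
    _ = ∑ j, ∑ i, ((∫ x, rhoWG n U x *
            (fderiv ℝ (fun y => Φ y i) x (EuclideanSpace.single j (1:ℝ))
              * fderiv ℝ (fun y => Φ y j) x (EuclideanSpace.single i (1:ℝ))))
        + (∫ x, rhoWG n U x * (Φ x j * (Φ x i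
            * fderiv ℝ (fderiv ℝ U) x (EuclideanSpace.single j (1:ℝ))
                (EuclideanSpace.single i (1:ℝ)))))
        + (if j = i then ∫ x, rhoWG n U x * (Φ x j * Φ x i) else 0)) :=
        Finset.sum_congr rfl fun j _ => Finset.sum_congr rfl fun i _ => by
          rw [← stepD hU hΦ hΦs i j]
    _ = (∑ j, ∑ i, ∫ x, rhoWG n U x *
            (fderiv ℝ (fun y => Φ y i) x (EuclideanSpace.single j (1:ℝ))
              * fderiv ℝ (fun y => Φ y j) x (EuclideanSpace.single i (1:ℝ))))
        + (∑ j, ∑ i, ∫ x, rhoWG n U x * (Φ x j * (Φ x i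
            * fderiv ℝ (fderiv ℝ U) x (EuclideanSpace.single j (1:ℝ))
                (EuclideanSpace.single i (1:ℝ)))))
        + (∑ j, ∑ i, if j = i then ∫ x, rhoWG n U x * (Φ x j * Φ x i) else 0) := by
        simp only [Finset.sum_add_distrib]
    _ = (∫ x, rhoWG n U x * ‖Φ x‖ ^ 2)
        + (∑ i, ∑ j, ∫ x, rhoWG n U x *
            (fderiv ℝ (fun y => Φ y i) x (EuclideanSpace.single j (1:ℝ))
              * fderiv ℝ (fun y => Φ y j) x (EuclideanSpace.single i (1:ℝ))))
        + ∫ x, rhoWG n U x * fderiv ℝ (fderiv ℝ U) x (Φ x) (Φ x) := by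
        rw [Finset.sum_comm, ← hT2]
        have h3 : (∑ j : Fin n, ∑ i : Fin n,
            if j = i then ∫ x, rhoWG n U x * (Φ x j * Φ x i) else 0)
            = ∫ x, rhoWG n U x * ‖Φ x‖ ^ 2 := by
          rw [← hT3]
          refine Finset.sum_congr rfl fun j _ => ?_
          rw [Finset.sum_ite_eq]
          simp
        rw [h3]
        ring

lemma dsum_sq {n : ℕ} (a : Fin n → Fin n → ℝ) :
    ∑ i, ∑ j, a i j * a j i ≤ ∑ i, ∑ j, (a i j) ^ 2 := by
  have key : ∑ i, ∑ j, (2 * (a i j * a j i)) ≤ ∑ i, ∑ j, ((a i j) ^ 2 + (a j i) ^ 2) :=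
    Finset.sum_le_sum fun i _ => Finset.sum_le_sum fun j _ => by
      nlinarith [sq_nonneg (a i j - a j i)]
  have h1 : ∑ i, ∑ j, (2 * (a i j * a j i)) = 2 * ∑ i, ∑ j, a i j * a j i := by
    rw [Finset.mul_sum]
    exact Finset.sum_congr rfl fun i _ => by rw [Finset.mul_sum]
  have h2 : ∑ i, ∑ j, ((a i j) ^ 2 + (a j i) ^ 2)
      = (∑ i, ∑ j, (a i j) ^ 2) + ∑ i, ∑ j, (a j i) ^ 2 := by
    simp only [Finset.sum_add_distrib]
  have h3 : (∑ i, ∑ j, (a j i) ^ 2) = ∑ i, ∑ j, (a i j) ^ 2 := Finset.sum_comm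
  rw [h1, h2, h3] at key
  linarith

lemma A_eq_zero (hΦs : HasCompactSupport Φ) (i : Fin n) {x : E'} (hx : x ∉ tsupport Φ) :
    fderiv ℝ (fun y => Φ y i) x = 0 := by
  apply image_eq_zero_of_notMem_tsupport
  intro hmem
  exact hx (closure_mono (Function.support_subset_iff.2 fun y hy => by
    intro h0y; exact hy (by rw [h0y]; rfl)) ((tsupport_fderiv_subset ℝ) hmem))

lemma main_ineq (hU : ContDiff ℝ 2 U) (hΦ : ContDiff ℝ (⊤ : ℕ∞) Φ) (hΦs : HasCompactSupport Φ) :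
    (∑ i, ∑ j, ∫ x, rhoWG n U x *
        (fderiv ℝ (fun y => Φ y i) x (EuclideanSpace.single j (1:ℝ))
          * fderiv ℝ (fun y => Φ y j) x (EuclideanSpace.single i (1:ℝ))))
      ≤ ∫ x, rhoWG n U x * (∑ i, ∑ j,
          (fderiv ℝ (fun y => Φ y i) x (EuclideanSpace.single j (1:ℝ))) ^ 2) := by
  have kij : ∀ i j : Fin n, Integrable (fun x => rhoWG n U x *
      (fderiv ℝ (fun y => Φ y i) x (EuclideanSpace.single j (1:ℝ))
        * fderiv ℝ (fun y => Φ y j) x (EuclideanSpace.single i (1:ℝ)))) volume := fun i j =>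
    keyInt hU ((A_cont hΦ i j).mul (A_cont hΦ j i)) (A_support hΦs i j).mul_right
  have hL : (∑ i, ∑ j, ∫ x, rhoWG n U x *
      (fderiv ℝ (fun y => Φ y i) x (EuclideanSpace.single j (1:ℝ))
        * fderiv ℝ (fun y => Φ y j) x (EuclideanSpace.single i (1:ℝ))))
      = ∫ x, ∑ i, ∑ j, rhoWG n U x *
          (fderiv ℝ (fun y => Φ y i) x (EuclideanSpace.single j (1:ℝ))
            * fderiv ℝ (fun y => Φ y j) x (EuclideanSpace.single i (1:ℝ))) :=
    ((integral_finset_sum _ fun i _ => integrable_finset_sum _ fun j _ => kij i j).trans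
      (Finset.sum_congr rfl fun i _ => integral_finset_sum _ fun j _ => kij i j)).symm
  rw [hL]
  have hRsupp : HasCompactSupport (fun x => ∑ i, ∑ j,
      (fderiv ℝ (fun y => Φ y i) x (EuclideanSpace.single j (1:ℝ))) ^ 2) := by
    apply HasCompactSupport.intro hΦs
    intro x hx
    apply Finset.sum_eq_zero
    intro i _
    apply Finset.sum_eq_zero
    intro j _
    rw [A_eq_zero hΦs i hx]
    simp
  have hRcont : Continuous (fun x : E' => ∑ i, ∑ j,
      (fderiv ℝ (fun y => Φ y i) x (EuclideanSpace.single j (1:ℝ))) ^ 2) :=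
    continuous_finset_sum _ fun i _ => continuous_finset_sum _ fun j _ => (A_cont hΦ i j).pow 2
  refine integral_mono (integrable_finset_sum _ fun i _ => integrable_finset_sum _ fun j _ =>
    kij i j) (keyInt hU hRcont hRsupp) ?_
  intro x
  dsimp only
  have hfac : ∑ i, ∑ j, rhoWG n U x *
      (fderiv ℝ (fun y => Φ y i) x (EuclideanSpace.single j (1:ℝ))
        * fderiv ℝ (fun y => Φ y j) x (EuclideanSpace.single i (1:ℝ)))
      = rhoWG n U x * ∑ i, ∑ j,
          (fderiv ℝ (fun y => Φ y i) x (EuclideanSpace.single j (1:ℝ))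
            * fderiv ℝ (fun y => Φ y j) x (EuclideanSpace.single i (1:ℝ))) := by
    rw [Finset.mul_sum]
    exact Finset.sum_congr rfl fun i _ => by rw [Finset.mul_sum]
  rw [hfac]
  exact mul_le_mul_of_nonneg_left
    (dsum_sq fun i j => fderiv ℝ (fun y => Φ y i) x (EuclideanSpace.single j (1:ℝ)))
    (rhoWG_pos U x).le

end Main

/-- the `L²(ν)` identity for `div_ν Φ` and the resulting estimate with
the Frobenius norm of the Jacobian of `Φ`. Here
`⟪D²U(x) Φ(x), Φ(x)⟫ = ∂_{Φ(x)} ∂_{Φ(x)} U (x)`. -/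
theorem weighted_gaussian_divergence_L2_estimate
    (n : ℕ) (U : EuclideanSpace ℝ (Fin n) → ℝ) (hU : ContDiff ℝ 2 U)
    (Φ : EuclideanSpace ℝ (Fin n) → EuclideanSpace ℝ (Fin n))
    (hΦ : ContDiff ℝ (⊤ : ℕ∞) Φ) (hΦs : HasCompactSupport Φ) :
    (∫ x, (divNu n U Φ x) ^ 2 ∂(weightedGaussian n U)
      = (∫ x, ‖Φ x‖ ^ 2 ∂(weightedGaussian n U))
        + (∑ i, ∑ j, ∫ x,
            (fderiv ℝ (fun y => Φ y i) x (EuclideanSpace.single j (1 : ℝ))) *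
            (fderiv ℝ (fun y => Φ y j) x (EuclideanSpace.single i (1 : ℝ)))
            ∂(weightedGaussian n U))
        + ∫ x, fderiv ℝ (fun y => fderiv ℝ U y (Φ x)) x (Φ x)
            ∂(weightedGaussian n U)) ∧
    ∫ x, (divNu n U Φ x) ^ 2 ∂(weightedGaussian n U)
      ≤ (∫ x, ‖Φ x‖ ^ 2 ∂(weightedGaussian n U))
        + (∫ x, (∑ i, ∑ j,
            (fderiv ℝ (fun y => Φ y i) x (EuclideanSpace.single j (1 : ℝ))) ^ 2)
            ∂(weightedGaussian n U))
        + ∫ x, fderiv ℝ (fun y => fderiv ℝ U y (Φ x)) x (Φ x)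
            ∂(weightedGaussian n U) := by
  have hUc : Continuous U := hU.continuous
  have hBUd : ∀ x : EuclideanSpace ℝ (Fin n), DifferentiableAt ℝ (fderiv ℝ U) x :=
    fun x => ((hU.fderiv_right (m := 1) (by norm_num)).differentiable one_ne_zero) x
  have hHess : ∀ x, rhoWG n U x * fderiv ℝ (fun y => fderiv ℝ U y (Φ x)) x (Φ x)
      = rhoWG n U x * fderiv ℝ (fderiv ℝ U) x (Φ x) (Φ x) := fun x => by
    rw [fderiv_fderiv_apply (hBUd x)]
  have hEq : ∫ x, (divNu n U Φ x) ^ 2 ∂(weightedGaussian n U)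
      = (∫ x, ‖Φ x‖ ^ 2 ∂(weightedGaussian n U))
        + (∑ i, ∑ j, ∫ x,
            (fderiv ℝ (fun y => Φ y i) x (EuclideanSpace.single j (1 : ℝ))) *
            (fderiv ℝ (fun y => Φ y j) x (EuclideanSpace.single i (1 : ℝ)))
            ∂(weightedGaussian n U))
        + ∫ x, fderiv ℝ (fun y => fderiv ℝ U y (Φ x)) x (Φ x)
            ∂(weightedGaussian n U) := by
    simp only [integral_weightedGaussian hUc]
    rw [Pcongr hHess]
    exact main_eq hU hΦ hΦs
  refine ⟨hEq, ?_⟩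
  rw [hEq]
  simp only [integral_weightedGaussian hUc]
  exact add_le_add (add_le_add le_rfl (main_ineq hU hΦ hΦs)) le_rfl
end

section
/- Let n ∈ ℕ, let U : ℝⁿ → ℝ be twice continuously differentiable and convex, let γ_n be the standard Gaussian measure on ℝⁿ and let ν be the measure with density e^{−U} with respect to γ_n. Let λ > 0, let u : ℝⁿ → ℝ be smooth and compactly supported, and set f := λu − L_ν u, where L_ν u(x) := Δu(x) − ⟨∇U(x) + x, ∇u(x)⟩. Then: (i) ‖u‖_{L²(ν)} ≤ λ^{-1} ‖f‖_{L²(ν)}; (ii) ‖ |∇u| ‖_{L²(ν)} ≤ λ^{-1/2} ‖f‖_{L²(ν)}; (iii) ∫_{ℝⁿ} ‖D²u‖²_F dν + ∫_{ℝⁿ} ⟨D²U ∇u, ∇u⟩ dν ≤ 2 ‖f‖²_{L²(ν)}, where ‖D²u(x)‖²_F = Σ_{i,j=1}^n (∂_i∂_j u(x))². -/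
open scoped RealInnerProductSpace
open MeasureTheory

/-- The weighted Gaussian elliptic operator
`L_ν u(x) = Δu(x) − ⟪∇U(x) + x, ∇u(x)⟫`. -/
noncomputable def ellOp (n : ℕ) (U u : EuclideanSpace ℝ (Fin n) → ℝ)
    (x : EuclideanSpace ℝ (Fin n)) : ℝ :=
  (∑ i, fderiv ℝ (fun y => fderiv ℝ u y (EuclideanSpace.single i (1 : ℝ))) x
      (EuclideanSpace.single i (1 : ℝ)))
    - ⟪gradient U x + x, gradient u x⟫

set_option maxHeartbeats 2000000

namespace WGMR
open Real
open scoped NNReal ENNReal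

variable {n : ℕ}

/-- coordinate partial derivative -/
noncomputable def pd (g : EuclideanSpace ℝ (Fin n) → ℝ) (i : Fin n)
    (x : EuclideanSpace ℝ (Fin n)) : ℝ :=
  fderiv ℝ g x (EuclideanSpace.single i (1:ℝ))

lemma pd_contDiff {g : EuclideanSpace ℝ (Fin n) → ℝ} {m k : WithTop ℕ∞}
    (hg : ContDiff ℝ k g) (h : m + 1 ≤ k) (i : Fin n) : ContDiff ℝ m (pd g i) :=
  (hg.fderiv_right h).clm_apply contDiff_const

lemma pd_contDiff_top {g : EuclideanSpace ℝ (Fin n) → ℝ}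
    (hg : ContDiff ℝ (⊤ : ℕ∞) g) (i : Fin n) : ContDiff ℝ (⊤ : ℕ∞) (pd g i) :=
  pd_contDiff hg (by simp) i

lemma pd_continuous {g : EuclideanSpace ℝ (Fin n) → ℝ} {k : WithTop ℕ∞}
    (hg : ContDiff ℝ k g) (h : 1 ≤ k) (i : Fin n) : Continuous (pd g i) :=
  (pd_contDiff (m := 0) hg (by simpa using h) i).continuous

lemma pd_hasCompactSupport {g : EuclideanSpace ℝ (Fin n) → ℝ}
    (hg : HasCompactSupport g) (i : Fin n) : HasCompactSupport (pd g i) :=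
  (hg.fderiv ℝ).comp_left (g := fun L : EuclideanSpace ℝ (Fin n) →L[ℝ] ℝ =>
    L (EuclideanSpace.single i (1:ℝ))) rfl

lemma pd_mul {g h : EuclideanSpace ℝ (Fin n) → ℝ} {x : EuclideanSpace ℝ (Fin n)} {i : Fin n}
    (hg : DifferentiableAt ℝ g x) (hh : DifferentiableAt ℝ h x) :
    pd (fun y => g y * h y) i x = g x * pd h i x + h x * pd g i x := by
  simp [pd, fderiv_fun_mul hg hh]

lemma pd_add {g h : EuclideanSpace ℝ (Fin n) → ℝ} {x : EuclideanSpace ℝ (Fin n)} {i : Fin n}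
    (hg : DifferentiableAt ℝ g x) (hh : DifferentiableAt ℝ h x) :
    pd (fun y => g y + h y) i x = pd g i x + pd h i x := by
  simp [pd, fderiv_fun_add hg hh]

lemma gradient_coord (g : EuclideanSpace ℝ (Fin n) → ℝ) (x : EuclideanSpace ℝ (Fin n))
    (i : Fin n) : gradient g x i = pd g i x := by
  have h1 : ⟪gradient g x, EuclideanSpace.single i (1:ℝ)⟫ = pd g i x := by
    simp [gradient, pd, InnerProductSpace.toDual_symm_apply]
  rw [← h1, EuclideanSpace.inner_single_right]
  simp

lemma fderiv_eq_inner_gradient (g : EuclideanSpace ℝ (Fin n) → ℝ)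
    (x v : EuclideanSpace ℝ (Fin n)) : fderiv ℝ g x v = ⟪gradient g x, v⟫ := by
  simp [gradient, InnerProductSpace.toDual_symm_apply]

lemma fderiv_eq_sum (g : EuclideanSpace ℝ (Fin n) → ℝ) (x v : EuclideanSpace ℝ (Fin n)) :
    fderiv ℝ g x v = ∑ i, pd g i x * v i := by
  rw [fderiv_eq_inner_gradient, PiLp.inner_apply]
  exact Finset.sum_congr rfl fun i _ => by simp [gradient_coord, RCLike.inner_apply]; ring

lemma pd_pd_eq_snd {g : EuclideanSpace ℝ (Fin n) → ℝ} {k : WithTop ℕ∞}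
    (hg : ContDiff ℝ k g) (h : 2 ≤ k) (i j : Fin n) (x : EuclideanSpace ℝ (Fin n)) :
    pd (pd g i) j x = fderiv ℝ (fderiv ℝ g) x (EuclideanSpace.single j (1:ℝ))
      (EuclideanSpace.single i (1:ℝ)) := by
  have hd : DifferentiableAt ℝ (fderiv ℝ g) x :=
    ((hg.fderiv_right (m := 1) (by rw [one_add_one_eq_two]; exact h)).differentiable
      one_ne_zero) x
  have h0 : pd (pd g i) j x
      = fderiv ℝ (fun y => fderiv ℝ g y (EuclideanSpace.single i (1:ℝ))) x
        (EuclideanSpace.single j (1:ℝ)) := rfl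
  rw [h0, fderiv_clm_apply hd (differentiableAt_const _)]
  simp

lemma pd_comm {g : EuclideanSpace ℝ (Fin n) → ℝ} {k : WithTop ℕ∞}
    (hg : ContDiff ℝ k g) (h : 2 ≤ k) (i j : Fin n) (x : EuclideanSpace ℝ (Fin n)) :
    pd (pd g i) j x = pd (pd g j) i x := by
  rw [pd_pd_eq_snd hg h, pd_pd_eq_snd hg h]
  exact (hg.contDiffAt.isSymmSndFDerivAt (by simpa using h)) _ _

lemma pd_coord (i j : Fin n) (x : EuclideanSpace ℝ (Fin n)) :
    pd (fun y => y j) i x = if i = j then (1:ℝ) else 0 := by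
  have : (fun y : EuclideanSpace ℝ (Fin n) => y j) = EuclideanSpace.proj (𝕜 := ℝ) j := rfl
  rw [pd, this, ContinuousLinearMap.fderiv]
  by_cases h : i = j <;> simp [EuclideanSpace.proj, h, EuclideanSpace.single_apply, eq_comm]

noncomputable def Wf (U : EuclideanSpace ℝ (Fin n) → ℝ) (x : EuclideanSpace ℝ (Fin n)) : ℝ :=
  U x + ‖x‖ ^ 2 / 2

noncomputable def rho (U : EuclideanSpace ℝ (Fin n) → ℝ) (x : EuclideanSpace ℝ (Fin n)) : ℝ :=
  (2 * Real.pi) ^ (-(n : ℝ) / 2) * Real.exp (-(Wf U x))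

variable {U : EuclideanSpace ℝ (Fin n) → ℝ}

lemma rho_pos (x : EuclideanSpace ℝ (Fin n)) : 0 < rho U x :=
  mul_pos (Real.rpow_pos_of_pos (by positivity) _) (Real.exp_pos _)

lemma Wf_contDiff (hU : ContDiff ℝ 2 U) : ContDiff ℝ 2 (Wf U) :=
  hU.add ((contDiff_norm_sq ℝ).div_const 2)

lemma rho_contDiff (hU : ContDiff ℝ 2 U) : ContDiff ℝ 2 (rho U) :=
  contDiff_const.mul (((Wf_contDiff hU).neg).exp)

lemma pdW_eq (hU : ContDiff ℝ 2 U) (i : Fin n) (x : EuclideanSpace ℝ (Fin n)) :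
    pd (Wf U) i x = pd U i x + x i := by
  have h1 : pd (Wf U) i x = pd U i x + pd (fun y => ‖y‖ ^ 2 / 2) i x :=
    pd_add ((hU.differentiable (by norm_num)) x)
      ((((contDiff_norm_sq ℝ (n := 1)).div_const 2).differentiable (by norm_num)) x)
  rw [h1]
  congr 1
  have h2 : HasFDerivAt (fun y : EuclideanSpace ℝ (Fin n) => ‖y‖ ^ 2)
      (2 • (innerSL ℝ x)) x := (hasStrictFDerivAt_norm_sq x).hasFDerivAt
  have h4 : pd (fun y : EuclideanSpace ℝ (Fin n) => ‖y‖ ^ 2 / 2) i x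
      = (1/2 : ℝ) * pd (fun y : EuclideanSpace ℝ (Fin n) => ‖y‖ ^ 2) i x := by
    have he : (fun y : EuclideanSpace ℝ (Fin n) => ‖y‖ ^ 2 / 2)
        = fun y => (1/2 : ℝ) * ‖y‖ ^ 2 := by funext y; ring
    rw [pd, he, fderiv_const_mul h2.differentiableAt ((1:ℝ)/2)]
    simp [pd]
  rw [h4, pd, h2.fderiv]
  simp [EuclideanSpace.inner_single_right]

lemma measure_eq (hU : Continuous U) :
    weightedGaussian n U = volume.withDensity (fun x => ENNReal.ofReal (rho U x)) := by
  unfold weightedGaussian stdGaussian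
  rw [← withDensity_mul]
  · congr 1
    ext x
    simp only [Pi.mul_apply]
    rw [← ENNReal.ofReal_mul (by positivity)]
    congr 1
    rw [rho, Wf, mul_assoc, ← Real.exp_add]
    ring_nf
  · exact (ENNReal.continuous_ofReal.comp
      (by continuity : Continuous fun x : EuclideanSpace ℝ (Fin n) =>
        (2 * Real.pi) ^ (-(n : ℝ) / 2) * Real.exp (-‖x‖ ^ 2 / 2))).measurable
  · exact (ENNReal.continuous_ofReal.comp
      ((Real.continuous_exp.comp hU.neg))).measurable

lemma integral_nu (hU : ContDiff ℝ 2 U) (g : EuclideanSpace ℝ (Fin n) → ℝ) :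
    ∫ x, g x ∂(weightedGaussian n U) = ∫ x, rho U x * g x ∂volume := by
  rw [measure_eq hU.continuous]
  have hm : Measurable fun x : EuclideanSpace ℝ (Fin n) => Real.toNNReal (rho U x) :=
    (rho_contDiff hU).continuous.measurable.real_toNNReal
  rw [show (fun x : EuclideanSpace ℝ (Fin n) => ENNReal.ofReal (rho U x))
      = fun x => ((Real.toNNReal (rho U x) : ℝ≥0) : ℝ≥0∞) from rfl,
    integral_withDensity_eq_integral_smul hm]
  refine integral_congr_ae (Filter.Eventually.of_forall fun x => ?_)
  simp [NNReal.smul_def, Real.coe_toNNReal _ (rho_pos x).le]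

lemma integrable_nu (hU : ContDiff ℝ 2 U) {g : EuclideanSpace ℝ (Fin n) → ℝ}
    (hg : Continuous g) (hgs : HasCompactSupport g) :
    Integrable g (weightedGaussian n U) := by
  rw [measure_eq hU.continuous]
  have hm : Measurable fun x : EuclideanSpace ℝ (Fin n) => Real.toNNReal (rho U x) :=
    (rho_contDiff hU).continuous.measurable.real_toNNReal
  rw [show (fun x : EuclideanSpace ℝ (Fin n) => ENNReal.ofReal (rho U x))
      = fun x => ((Real.toNNReal (rho U x) : ℝ≥0) : ℝ≥0∞) from rfl,
    integrable_withDensity_iff_integrable_smul hm]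
  have : (fun x => Real.toNNReal (rho U x) • g x)
      = fun x => rho U x * g x := by
    funext x; simp [NNReal.smul_def, Real.coe_toNNReal _ (rho_pos x).le]
  rw [this]
  exact (((rho_contDiff hU).continuous).mul hg).integrable_of_hasCompactSupport hgs.mul_left

lemma hasFDerivAt_rho (hU : ContDiff ℝ 2 U) (x : EuclideanSpace ℝ (Fin n)) :
    HasFDerivAt (rho U) (-rho U x • fderiv ℝ (Wf U) x) x := by
  have hW : DifferentiableAt ℝ (Wf U) x :=
    ((Wf_contDiff hU).differentiable (by norm_num)) x
  have h1 : HasFDerivAt (fun y => Real.exp (-(Wf U y)))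
      (Real.exp (-(Wf U x)) • (-fderiv ℝ (Wf U) x)) x :=
    (hW.hasFDerivAt.neg).exp
  have h2 := h1.const_mul ((2 * Real.pi) ^ (-(n : ℝ) / 2))
  refine h2.congr_fderiv ?_
  rw [rho]
  ext v
  simp
  ring

lemma pd_rho (hU : ContDiff ℝ 2 U) (i : Fin n) (x : EuclideanSpace ℝ (Fin n)) :
    pd (rho U) i x = -(pd (Wf U) i x * rho U x) := by
  rw [pd, (hasFDerivAt_rho hU x).fderiv]
  simp [pd]
  ring

/-- The fundamental integration-by-parts identity for `ν`. -/
lemma ibp (hU : ContDiff ℝ 2 U) {g : EuclideanSpace ℝ (Fin n) → ℝ}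
    (hg1 : ContDiff ℝ 1 g) (hgs : HasCompactSupport g) (i : Fin n) :
    ∫ x, pd g i x ∂(weightedGaussian n U)
      = ∫ x, g x * pd (Wf U) i x ∂(weightedGaussian n U) := by
  have hρd : Differentiable ℝ (rho U) := fun x => (hasFDerivAt_rho hU x).differentiableAt
  have hgd : Differentiable ℝ g := hg1.differentiable one_ne_zero
  have contpdg : Continuous (pd g i) := pd_continuous hg1 le_rfl i
  have contpdW : Continuous (pd (Wf U) i) := pd_continuous (Wf_contDiff hU) (by norm_num) i
  have contρ : Continuous (rho U) := (rho_contDiff hU).continuous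
  have contg : Continuous g := hg1.continuous
  have hpdρ : pd (rho U) i = fun x => -(pd (Wf U) i x * rho U x) := funext (pd_rho hU i)
  have I1 : Integrable (fun x => fderiv ℝ g x (EuclideanSpace.single i (1:ℝ)) * rho U x)
      (volume : Measure (EuclideanSpace ℝ (Fin n))) :=
    (contpdg.mul contρ).integrable_of_hasCompactSupport
      ((pd_hasCompactSupport hgs i).mul_right)
  have I2 : Integrable (fun x => g x * fderiv ℝ (rho U) x (EuclideanSpace.single i (1:ℝ)))
      (volume : Measure (EuclideanSpace ℝ (Fin n))) := by
    have : Continuous (pd (rho U) i) := by rw [hpdρ]; exact (contpdW.mul contρ).neg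
    exact (contg.mul this).integrable_of_hasCompactSupport hgs.mul_right
  have I3 : Integrable (fun x => g x * rho U x)
      (volume : Measure (EuclideanSpace ℝ (Fin n))) :=
    (contg.mul contρ).integrable_of_hasCompactSupport hgs.mul_right
  have key := integral_mul_fderiv_eq_neg_fderiv_mul_of_integrable
    (μ := (volume : Measure (EuclideanSpace ℝ (Fin n))))
    (f := g) (g := rho U) (v := EuclideanSpace.single i (1:ℝ)) I1 I2 I3 (fun x _ => hgd x) (fun x _ => hρd x)
  rw [integral_nu hU, integral_nu hU]
  have e0 : ∫ x, rho U x * pd g i x ∂(volume : Measure (EuclideanSpace ℝ (Fin n)))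
      = ∫ x, fderiv ℝ g x (EuclideanSpace.single i (1:ℝ)) * rho U x ∂volume := by
    congr 1
    funext x
    rw [pd, mul_comm]
  have e1 : ∫ x, rho U x * pd g i x ∂(volume : Measure (EuclideanSpace ℝ (Fin n)))
      = - ∫ x, g x * fderiv ℝ (rho U) x (EuclideanSpace.single i (1:ℝ)) ∂volume := by
    rw [e0]; linarith [key]
  rw [e1]
  rw [← integral_neg]
  congr 1
  funext x
  have : fderiv ℝ (rho U) x (EuclideanSpace.single i (1:ℝ)) = pd (rho U) i x := rfl
  rw [this, pd_rho hU]
  ring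

lemma hcs_mull {a b : EuclideanSpace ℝ (Fin n) → ℝ} (ha : HasCompactSupport a) :
    HasCompactSupport (fun x => a x * b x) := ha.mul_right

lemma hcs_mulr {a b : EuclideanSpace ℝ (Fin n) → ℝ} (hb : HasCompactSupport b) :
    HasCompactSupport (fun x => a x * b x) := hb.mul_left

lemma hcs_sub {a b : EuclideanSpace ℝ (Fin n) → ℝ} (ha : HasCompactSupport a)
    (hb : HasCompactSupport b) : HasCompactSupport (fun x => a x - b x) := by
  have hnb : HasCompactSupport (fun x => -(b x)) :=
    hb.comp_left (g := fun t : ℝ => -t) (by simp)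
  have := ha.add hnb
  rw [show (fun x => a x - b x) = a + fun x => -b x from funext fun x => by simp [sub_eq_add_neg]]
  exact this

lemma hcs_sum {ι : Type*} (s : Finset ι) (F : ι → EuclideanSpace ℝ (Fin n) → ℝ)
    (h : ∀ j ∈ s, HasCompactSupport (F j)) :
    HasCompactSupport (fun x => ∑ j ∈ s, F j x) := by
  classical
  induction s using Finset.induction_on with
  | empty => exact HasCompactSupport.intro isCompact_empty (fun x _ => by simp)
  | insert _ _ hnm ih =>
      simp_rw [Finset.sum_insert hnm]
      exact (h _ (Finset.mem_insert_self _ _)).add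
        (ih fun j hj => h j (Finset.mem_insert_of_mem hj))

lemma pd_sub {g h : EuclideanSpace ℝ (Fin n) → ℝ} {x : EuclideanSpace ℝ (Fin n)} {i : Fin n}
    (hg : DifferentiableAt ℝ g x) (hh : DifferentiableAt ℝ h x) :
    pd (fun y => g y - h y) i x = pd g i x - pd h i x := by
  simp [pd, fderiv_fun_sub hg hh]

lemma pd_sum {ι : Type*} (s : Finset ι) (F : ι → EuclideanSpace ℝ (Fin n) → ℝ)
    {x : EuclideanSpace ℝ (Fin n)} (h : ∀ j ∈ s, DifferentiableAt ℝ (F j) x) (i : Fin n) :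
    pd (fun y => ∑ j ∈ s, F j y) i x = ∑ j ∈ s, pd (F j) i x := by
  rw [pd, fderiv_fun_sum h]
  simp [pd]

/-- product-rule form of the integration by parts -/
lemma ibp_prod (hU : ContDiff ℝ 2 U) {a c : EuclideanSpace ℝ (Fin n) → ℝ}
    (ha : ContDiff ℝ 1 a) (hc : ContDiff ℝ 1 c) (hacs : HasCompactSupport a) (i : Fin n) :
    ∫ x, (a x * pd c i x + c x * pd a i x) ∂(weightedGaussian n U)
      = ∫ x, a x * c x * pd (Wf U) i x ∂(weightedGaussian n U) := by
  have hprod : HasCompactSupport (fun y => a y * c y) := hcs_mull hacs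
  have h := ibp hU (ha.mul hc) hprod i
  have e : ∫ x, pd (fun y => a y * c y) i x ∂(weightedGaussian n U)
      = ∫ x, (a x * pd c i x + c x * pd a i x) ∂(weightedGaussian n U) := by
    refine integral_congr_ae (Filter.Eventually.of_forall fun x => ?_)
    exact pd_mul ((ha.differentiable one_ne_zero) x) ((hc.differentiable one_ne_zero) x)
  rw [e] at h
  exact h

/-- the elliptic operator in coordinates -/
noncomputable def Lop (U u : EuclideanSpace ℝ (Fin n) → ℝ) (x : EuclideanSpace ℝ (Fin n)) : ℝ :=
  (∑ i, pd (pd u i) i x) - ∑ i, pd (Wf U) i x * pd u i x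

lemma ellOp_eq (hU : ContDiff ℝ 2 U) {u : EuclideanSpace ℝ (Fin n) → ℝ}
    (x : EuclideanSpace ℝ (Fin n)) : ellOp n U u x = Lop U u x := by
  rw [ellOp, Lop]
  congr 1
  have h1 : ⟪gradient U x + x, gradient u x⟫ = ∑ i, (gradient U x i + x i) * gradient u x i := by
    rw [PiLp.inner_apply]
    exact Finset.sum_congr rfl fun i _ => by simp [RCLike.inner_apply]; ring
  rw [h1]
  refine Finset.sum_congr rfl fun i _ => ?_
  rw [gradient_coord, gradient_coord, pdW_eq hU]

section Main

variable {u : EuclideanSpace ℝ (Fin n) → ℝ}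

lemma idA (hU : ContDiff ℝ 2 U) (hu : ContDiff ℝ (⊤ : ℕ∞) u) (hus : HasCompactSupport u) :
    ∫ x, u x * Lop U u x ∂(weightedGaussian n U)
      = - ∫ x, ∑ i, pd u i x * pd u i x ∂(weightedGaussian n U) := by
  set ν := weightedGaussian n U with hν
  have Cu : Continuous u := hu.continuous
  have C1 : ∀ i, Continuous (pd u i) := fun i => pd_continuous hu (by simp) i
  have S1 : ∀ i, HasCompactSupport (pd u i) := fun i => pd_hasCompactSupport hus i
  have C2 : ∀ i j, Continuous (pd (pd u i) j) :=
    fun i j => pd_continuous (pd_contDiff_top hu i) (by simp) j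
  have CW : ∀ i, Continuous (pd (Wf U) i) :=
    fun i => pd_continuous (Wf_contDiff hU) (by norm_num) i
  have Ig : ∀ (g : EuclideanSpace ℝ (Fin n) → ℝ), Continuous g → HasCompactSupport g →
      Integrable g ν := fun g hg hgs => integrable_nu hU hg hgs
  have EA : ∀ i : Fin n, ∫ x, u x * pd (pd u i) i x ∂ν
      = ∫ x, u x * pd u i x * pd (Wf U) i x ∂ν - ∫ x, pd u i x * pd u i x ∂ν := by
    intro i
    have h := ibp_prod hU (hu.of_le (by simp)) (pd_contDiff hu (WithTop.coe_le_coe.mpr le_top) i) hus i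
    rw [integral_add
      (Ig _ (Cu.fun_mul (C2 i i)) (hcs_mull hus))
      (Ig _ ((C1 i).fun_mul (C1 i)) (hcs_mull (S1 i)))] at h
    linarith [h]
  have expand : ∫ x, u x * Lop U u x ∂ν
      = (∑ i, ∫ x, u x * pd (pd u i) i x ∂ν) - ∑ i, ∫ x, u x * (pd (Wf U) i x * pd u i x) ∂ν := by
    rw [← integral_finset_sum _ (fun i _ => Ig _ (Cu.fun_mul (C2 i i)) (hcs_mull hus)),
      ← integral_finset_sum _ (fun i _ => Ig _ (Cu.fun_mul ((CW i).fun_mul (C1 i))) (hcs_mull hus))]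
    rw [← integral_sub
      (integrable_finset_sum _ (fun i _ => Ig _ (Cu.fun_mul (C2 i i)) (hcs_mull hus)))
      (integrable_finset_sum _ (fun i _ => Ig _ (Cu.fun_mul ((CW i).fun_mul (C1 i))) (hcs_mull hus)))]
    refine integral_congr_ae (Filter.Eventually.of_forall fun x => ?_)
    simp only [Lop]
    rw [mul_sub, Finset.mul_sum, Finset.mul_sum]
  have comm : ∀ i : Fin n, ∫ x, u x * (pd (Wf U) i x * pd u i x) ∂ν
      = ∫ x, u x * pd u i x * pd (Wf U) i x ∂ν :=
    fun i => integral_congr_ae (Filter.Eventually.of_forall fun x => by ring)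
  rw [expand, Finset.sum_congr rfl (fun i _ => EA i), Finset.sum_congr rfl (fun i _ => comm i),
    Finset.sum_sub_distrib,
    ← integral_finset_sum _ (fun i _ => Ig _ ((C1 i).fun_mul (C1 i)) (hcs_mull (S1 i)))]
  ring


lemma idB (hU : ContDiff ℝ 2 U) (hu : ContDiff ℝ (⊤ : ℕ∞) u) (hus : HasCompactSupport u) :
    ∫ x, Lop U u x * Lop U u x ∂(weightedGaussian n U)
      = ∫ x, ∑ i, ∑ j, pd (pd u j) i x * pd (pd u j) i x ∂(weightedGaussian n U)
        + ∫ x, ∑ i, ∑ j, pd (pd U j) i x * pd u i x * pd u j x ∂(weightedGaussian n U)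
        + ∫ x, ∑ i, pd u i x * pd u i x ∂(weightedGaussian n U) := by
  classical
  set ν := weightedGaussian n U with hν
  have Cu : Continuous u := hu.continuous
  have C1 : ∀ i, Continuous (pd u i) := fun i => pd_continuous hu (by simp) i
  have S1 : ∀ i, HasCompactSupport (pd u i) := fun i => pd_hasCompactSupport hus i
  have D1 : ∀ i, ContDiff ℝ (⊤ : ℕ∞) (pd u i) := fun i => pd_contDiff_top hu i
  have C2 : ∀ j i, Continuous (pd (pd u j) i) := fun j i => pd_continuous (D1 j) (by simp) i
  have S2 : ∀ j i, HasCompactSupport (pd (pd u j) i) := fun j i => pd_hasCompactSupport (S1 j) i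
  have D2 : ∀ j i, ContDiff ℝ (⊤ : ℕ∞) (pd (pd u j) i) := fun j i => pd_contDiff_top (D1 j) i
  have C3 : ∀ j k i, Continuous (pd (pd (pd u j) k) i) :=
    fun j k i => pd_continuous (D2 j k) (by simp) i
  have hW2 : ContDiff ℝ 2 (Wf U) := Wf_contDiff hU
  have DW : ∀ i, ContDiff ℝ 1 (pd (Wf U) i) := fun i => pd_contDiff hW2 (by norm_num) i
  have CW : ∀ i, Continuous (pd (Wf U) i) := fun i => (DW i).continuous
  have CW2 : ∀ j i, Continuous (pd (pd (Wf U) j) i) := fun j i => pd_continuous (DW j) le_rfl i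
  have CU2 : ∀ j i, Continuous (pd (pd U j) i) :=
    fun j i => pd_continuous (pd_contDiff hU (by norm_num) j) le_rfl i
  have Ig : ∀ (g : EuclideanSpace ℝ (Fin n) → ℝ), Continuous g → HasCompactSupport g →
      Integrable g ν := fun g hg hgs => integrable_nu hU hg hgs
  have SLop : HasCompactSupport (Lop U u) :=
    hcs_sub (hcs_sum _ _ (fun i _ => S2 i i)) (hcs_sum _ _ (fun i _ => hcs_mulr (S1 i)))
  have LLop : ContDiff ℝ 1 (Lop U u) :=
    (ContDiff.sum fun i _ => (D2 i i).of_le (by simp)).sub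
      (ContDiff.sum fun i _ => (DW i).mul ((D1 i).of_le (by simp)))
  have CLop : Continuous (Lop U u) := LLop.continuous
  have pdLop : ∀ (i : Fin n) x, pd (Lop U u) i x
      = (∑ j, pd (pd (pd u j) j) i x)
        - ∑ j, (pd (Wf U) j x * pd (pd u j) i x + pd u j x * pd (pd (Wf U) j) i x) := by
    intro i x
    have dF : ∀ j : Fin n, DifferentiableAt ℝ (fun y => pd (pd u j) j y) x :=
      fun j => ((D2 j j).differentiable (by simp)) x
    have dG : ∀ j : Fin n, DifferentiableAt ℝ (fun y => pd (Wf U) j y * pd u j y) x :=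
      fun j => (((DW j).differentiable one_ne_zero) x).mul (((D1 j).differentiable (by simp)) x)
    have e0 : pd (Lop U u) i x
        = pd (fun y => (∑ j, pd (pd u j) j y) - ∑ j, pd (Wf U) j y * pd u j y) i x := rfl
    rw [e0, pd_sub (DifferentiableAt.fun_sum fun j _ => dF j) (DifferentiableAt.fun_sum fun j _ => dG j),
      pd_sum _ _ (fun j _ => dF j) i, pd_sum _ _ (fun j _ => dG j) i]
    congr 1
    refine Finset.sum_congr rfl fun j _ => ?_
    rw [pd_mul (((DW j).differentiable one_ne_zero) x) (((D1 j).differentiable (by simp)) x)]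
  have CpdLop : ∀ i, Continuous (pd (Lop U u) i) := by
    intro i
    have e : pd (Lop U u) i = fun x => (∑ j, pd (pd (pd u j) j) i x)
        - ∑ j, (pd (Wf U) j x * pd (pd u j) i x + pd u j x * pd (pd (Wf U) j) i x) :=
      funext (pdLop i)
    rw [e]
    exact (continuous_finset_sum _ fun j _ => C3 j j i).sub
      (continuous_finset_sum _ fun j _ =>
        ((CW j).mul (C2 j i)).add ((C1 j).mul (CW2 j i)))
  have EB : ∀ i : Fin n, ∫ x, Lop U u x * pd (pd u i) i x ∂ν
        + ∫ x, pd u i x * pd (Lop U u) i x ∂ν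
      = ∫ x, Lop U u x * pd u i x * pd (Wf U) i x ∂ν := by
    intro i
    have h := ibp_prod hU LLop (pd_contDiff hu (WithTop.coe_le_coe.mpr le_top) i) SLop i
    rwa [integral_add (Ig _ (CLop.fun_mul (C2 i i)) (hcs_mull SLop))
      (Ig _ ((C1 i).fun_mul (CpdLop i)) (hcs_mull (S1 i)))] at h
  have expandL : ∫ x, Lop U u x * Lop U u x ∂ν
      = (∑ i, ∫ x, Lop U u x * pd (pd u i) i x ∂ν)
        - ∑ i, ∫ x, Lop U u x * (pd (Wf U) i x * pd u i x) ∂ν := by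
    rw [← integral_finset_sum _ (fun i _ => Ig _ (CLop.fun_mul (C2 i i)) (hcs_mull SLop)),
        ← integral_finset_sum _ (fun i _ => Ig _ (CLop.fun_mul ((CW i).fun_mul (C1 i))) (hcs_mull SLop)),
        ← integral_sub
          (integrable_finset_sum _ (fun i _ => Ig _ (CLop.fun_mul (C2 i i)) (hcs_mull SLop)))
          (integrable_finset_sum _ (fun i _ =>
            Ig _ (CLop.fun_mul ((CW i).fun_mul (C1 i))) (hcs_mull SLop)))]
    refine integral_congr_ae (Filter.Eventually.of_forall fun x => ?_)
    have hL : Lop U u x = (∑ i, pd (pd u i) i x) - ∑ i, pd (Wf U) i x * pd u i x := rfl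
    calc Lop U u x * Lop U u x
        = Lop U u x * ((∑ i, pd (pd u i) i x) - ∑ i, pd (Wf U) i x * pd u i x) := by rw [← hL]
      _ = (∑ i, Lop U u x * pd (pd u i) i x)
            - ∑ i, Lop U u x * (pd (Wf U) i x * pd u i x) := by
          rw [mul_sub, Finset.mul_sum, Finset.mul_sum]
  have B1 : ∫ x, Lop U u x * Lop U u x ∂ν
      = - ∑ i, ∫ x, pd u i x * pd (Lop U u) i x ∂ν := by
    have e1 : ∀ i : Fin n, ∫ x, Lop U u x * (pd (Wf U) i x * pd u i x) ∂ν
        = ∫ x, Lop U u x * pd u i x * pd (Wf U) i x ∂ν :=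
      fun i => integral_congr_ae (Filter.Eventually.of_forall fun x => by ring)
    rw [expandL, Finset.sum_congr rfl (fun i _ => e1 i), ← Finset.sum_sub_distrib]
    calc ∑ i : Fin n, (∫ x, Lop U u x * pd (pd u i) i x ∂ν
          - ∫ x, Lop U u x * pd u i x * pd (Wf U) i x ∂ν)
        = ∑ i : Fin n, -(∫ x, pd u i x * pd (Lop U u) i x ∂ν) :=
          Finset.sum_congr rfl fun i _ => by linarith [EB i]
      _ = - ∑ i : Fin n, ∫ x, pd u i x * pd (Lop U u) i x ∂ν := by
          rw [Finset.sum_neg_distrib]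
  have B2 : ∀ i : Fin n, ∫ x, pd u i x * pd (Lop U u) i x ∂ν
      = (∑ j, ∫ x, pd u i x * pd (pd (pd u j) j) i x ∂ν)
        - (∑ j, ∫ x, pd u i x * (pd (Wf U) j x * pd (pd u j) i x) ∂ν)
        - ∑ j, ∫ x, pd u i x * (pd u j x * pd (pd (Wf U) j) i x) ∂ν := by
    intro i
    have e : ∀ x, pd u i x * pd (Lop U u) i x
        = (∑ j, pd u i x * pd (pd (pd u j) j) i x)
          - ((∑ j, pd u i x * (pd (Wf U) j x * pd (pd u j) i x))
             + ∑ j, pd u i x * (pd u j x * pd (pd (Wf U) j) i x)) := by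
      intro x
      rw [pdLop i x, mul_sub, Finset.mul_sum, Finset.mul_sum, ← Finset.sum_add_distrib]
      congr 1
      refine Finset.sum_congr rfl fun j _ => by ring
    have I1 : ∀ j : Fin n, Integrable (fun x => pd u i x * pd (pd (pd u j) j) i x) ν :=
      fun j => Ig _ ((C1 i).mul (C3 j j i)) (hcs_mull (S1 i))
    have I2 : ∀ j : Fin n, Integrable
        (fun x => pd u i x * (pd (Wf U) j x * pd (pd u j) i x)) ν :=
      fun j => Ig _ ((C1 i).mul ((CW j).mul (C2 j i))) (hcs_mull (S1 i))
    have I3 : ∀ j : Fin n, Integrable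
        (fun x => pd u i x * (pd u j x * pd (pd (Wf U) j) i x)) ν :=
      fun j => Ig _ ((C1 i).mul ((C1 j).mul (CW2 j i))) (hcs_mull (S1 i))
    have I23 : Integrable (fun x => (∑ j, pd u i x * (pd (Wf U) j x * pd (pd u j) i x))
        + ∑ j, pd u i x * (pd u j x * pd (pd (Wf U) j) i x)) ν :=
      (integrable_finset_sum _ (fun j _ => I2 j)).add
        (integrable_finset_sum _ (fun j _ => I3 j))
    rw [integral_congr_ae (Filter.Eventually.of_forall e),
      integral_sub (integrable_finset_sum _ (fun j _ => I1 j)) I23,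
      integral_add (integrable_finset_sum _ (fun j _ => I2 j))
        (integrable_finset_sum _ (fun j _ => I3 j)),
      integral_finset_sum _ (fun j _ => I1 j),
      integral_finset_sum _ (fun j _ => I2 j),
      integral_finset_sum _ (fun j _ => I3 j)]
    ring
  have B3 : ∀ i j : Fin n, ∫ x, pd u i x * pd (pd (pd u j) j) i x ∂ν
      = ∫ x, pd u i x * (pd (Wf U) j x * pd (pd u j) i x) ∂ν
        - ∫ x, pd (pd u j) i x * pd (pd u j) i x ∂ν := by
    intro i j
    have sw : ∀ x, pd (pd (pd u j) j) i x = pd (pd (pd u j) i) j x :=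
      fun x => pd_comm (D1 j) (WithTop.coe_le_coe.mpr le_top) j i x
    have h := ibp_prod hU ((D1 i).of_le (by simp)) ((D2 j i).of_le (by simp)) (S1 i) j
    have h2 : ∫ x, (pd u i x * pd (pd (pd u j) i) j x
          + pd (pd u j) i x * pd (pd u j) i x) ∂ν
        = ∫ x, pd u i x * pd (pd u j) i x * pd (Wf U) j x ∂ν := by
      rw [← h]
      refine integral_congr_ae (Filter.Eventually.of_forall fun x => ?_)
      simp only [pd_comm hu (WithTop.coe_le_coe.mpr le_top) i j x]
    have hsplit := integral_add (μ := ν)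
      (Ig _ ((C1 i).mul (C3 j i j)) (hcs_mull (S1 i)))
      (Ig _ ((C2 j i).mul (C2 j i)) (hcs_mull (S2 j i)))
      (f := fun x => pd u i x * pd (pd (pd u j) i) j x)
      (g := fun x => pd (pd u j) i x * pd (pd u j) i x)
    rw [hsplit] at h2
    have e0 : ∫ x, pd u i x * pd (pd (pd u j) j) i x ∂ν
        = ∫ x, pd u i x * pd (pd (pd u j) i) j x ∂ν := by
      refine integral_congr_ae (Filter.Eventually.of_forall fun x => ?_)
      simp only [sw x]
    have ecomm : ∫ x, pd u i x * pd (pd u j) i x * pd (Wf U) j x ∂ν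
        = ∫ x, pd u i x * (pd (Wf U) j x * pd (pd u j) i x) ∂ν :=
      integral_congr_ae (Filter.Eventually.of_forall fun x => by ring)
    rw [e0]
    linarith [h2, ecomm]
  have B4 : ∀ (i j : Fin n) x, pd (pd (Wf U) j) i x
      = pd (pd U j) i x + (if i = j then (1:ℝ) else 0) := by
    intro i j x
    have e : pd (Wf U) j = fun y => pd U j y + y j := funext (pdW_eq hU j)
    have dU : DifferentiableAt ℝ (pd U j) x :=
      ((pd_contDiff (m := 1) hU (by norm_num) j).differentiable one_ne_zero) x
    have dc : DifferentiableAt ℝ (fun y : EuclideanSpace ℝ (Fin n) => y j) x := by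
      have : (fun y : EuclideanSpace ℝ (Fin n) => y j) = EuclideanSpace.proj (𝕜 := ℝ) j := rfl
      rw [this]
      exact (EuclideanSpace.proj (𝕜 := ℝ) j).differentiableAt
    rw [e, pd_add dU dc, pd_coord]
  have B5 : ∀ i j : Fin n, ∫ x, pd u i x * (pd u j x * pd (pd (Wf U) j) i x) ∂ν
      = ∫ x, pd (pd U j) i x * pd u i x * pd u j x ∂ν
        + (if i = j then ∫ x, pd u i x * pd u j x ∂ν else 0) := by
    intro i j
    have e : ∀ x, pd u i x * (pd u j x * pd (pd (Wf U) j) i x)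
        = pd (pd U j) i x * pd u i x * pd u j x
          + (if i = j then pd u i x * pd u j x else 0) := by
      intro x
      rw [B4 i j x]
      by_cases hij : i = j <;> simp [hij] <;> ring
    have IA : Integrable (fun x => pd (pd U j) i x * pd u i x * pd u j x) ν :=
      Ig _ (((CU2 j i).mul (C1 i)).mul (C1 j)) (hcs_mull (hcs_mulr (S1 i)))
    have IB : Integrable (fun x => pd u i x * pd u j x) ν :=
      Ig _ ((C1 i).mul (C1 j)) (hcs_mull (S1 i))
    rw [integral_congr_ae (Filter.Eventually.of_forall e)]
    by_cases hij : i = j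
    · simp only [if_pos hij]
      rw [integral_add IA IB]
    · simp only [if_neg hij, add_zero]
  -- convert the RHS integrals of sums to sums of integrals
  have sumint1 : ∫ x, ∑ i, ∑ j, pd (pd u j) i x * pd (pd u j) i x ∂ν
      = ∑ i : Fin n, ∑ j : Fin n, ∫ x, pd (pd u j) i x * pd (pd u j) i x ∂ν := by
    rw [integral_finset_sum _ (fun i _ => integrable_finset_sum _
      (fun j _ => Ig _ ((C2 j i).fun_mul (C2 j i)) (hcs_mull (S2 j i))))]
    exact Finset.sum_congr rfl fun i _ => integral_finset_sum _
      (fun j _ => Ig _ ((C2 j i).fun_mul (C2 j i)) (hcs_mull (S2 j i)))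
  have sumint2 : ∫ x, ∑ i, ∑ j, pd (pd U j) i x * pd u i x * pd u j x ∂ν
      = ∑ i : Fin n, ∑ j : Fin n, ∫ x, pd (pd U j) i x * pd u i x * pd u j x ∂ν := by
    rw [integral_finset_sum _ (fun i _ => integrable_finset_sum _
      (fun j _ => Ig _ (((CU2 j i).fun_mul (C1 i)).fun_mul (C1 j)) (hcs_mull (hcs_mulr (S1 i)))))]
    exact Finset.sum_congr rfl fun i _ => integral_finset_sum _
      (fun j _ => Ig _ (((CU2 j i).fun_mul (C1 i)).fun_mul (C1 j)) (hcs_mull (hcs_mulr (S1 i))))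
  have sumint3 : ∫ x, ∑ i, pd u i x * pd u i x ∂ν
      = ∑ i : Fin n, ∫ x, pd u i x * pd u i x ∂ν :=
    integral_finset_sum _ (fun i _ => Ig _ ((C1 i).mul (C1 i)) (hcs_mull (S1 i)))
  rw [B1, sumint1, sumint2, sumint3, Finset.sum_congr rfl (fun i _ => B2 i)]
  have step : ∀ i : Fin n,
      (∑ j, ∫ x, pd u i x * pd (pd (pd u j) j) i x ∂ν)
        - (∑ j, ∫ x, pd u i x * (pd (Wf U) j x * pd (pd u j) i x) ∂ν)
        - ∑ j, ∫ x, pd u i x * (pd u j x * pd (pd (Wf U) j) i x) ∂ν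
      = -((∑ j, ∫ x, pd (pd u j) i x * pd (pd u j) i x ∂ν)
          + (∑ j, ∫ x, pd (pd U j) i x * pd u i x * pd u j x ∂ν)
          + ∫ x, pd u i x * pd u i x ∂ν) := by
    intro i
    have ha : (∑ j, ∫ x, pd u i x * pd (pd (pd u j) j) i x ∂ν)
        - ∑ j, ∫ x, pd u i x * (pd (Wf U) j x * pd (pd u j) i x) ∂ν
        = - ∑ j : Fin n, ∫ x, pd (pd u j) i x * pd (pd u j) i x ∂ν := by
      rw [← Finset.sum_sub_distrib]
      rw [Finset.sum_congr rfl (fun j _ => by linarith [B3 i j] :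
        ∀ j ∈ Finset.univ, (∫ x, pd u i x * pd (pd (pd u j) j) i x ∂ν)
          - ∫ x, pd u i x * (pd (Wf U) j x * pd (pd u j) i x) ∂ν
          = -(∫ x, pd (pd u j) i x * pd (pd u j) i x ∂ν))]
      rw [Finset.sum_neg_distrib]
    have hb : ∑ j, ∫ x, pd u i x * (pd u j x * pd (pd (Wf U) j) i x) ∂ν
        = (∑ j, ∫ x, pd (pd U j) i x * pd u i x * pd u j x ∂ν)
          + ∫ x, pd u i x * pd u i x ∂ν := by
      rw [Finset.sum_congr rfl (fun j _ => B5 i j), Finset.sum_add_distrib]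
      congr 1
      simp [Finset.sum_ite_eq]
    linarith [ha, hb]
  rw [Finset.sum_congr rfl (fun i _ => step i), Finset.sum_neg_distrib, neg_neg]
  rw [Finset.sum_add_distrib, Finset.sum_add_distrib]


lemma Lop_hasCompactSupport (hus : HasCompactSupport u) : HasCompactSupport (Lop U u) :=
  hcs_sub
    (hcs_sum _ _ fun i _ => pd_hasCompactSupport (pd_hasCompactSupport hus i) i)
    (hcs_sum _ _ fun i _ => hcs_mulr (pd_hasCompactSupport hus i))

lemma Lop_contDiff (hU : ContDiff ℝ 2 U) (hu : ContDiff ℝ (⊤ : ℕ∞) u) : ContDiff ℝ 1 (Lop U u) :=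
  (ContDiff.sum fun i _ => (pd_contDiff_top (pd_contDiff_top hu i) i).of_le (by simp)).sub
    (ContDiff.sum fun i _ => (pd_contDiff (Wf_contDiff hU) (by norm_num) i).mul
      ((pd_contDiff_top hu i).of_le (by simp)))

end Main

end WGMR


open WGMR in
theorem weighted_gaussian_maximal_regularity
    (n : ℕ) (U : EuclideanSpace ℝ (Fin n) → ℝ) (hU : ContDiff ℝ 2 U)
    (hUconv : ConvexOn ℝ Set.univ U)
    (lam : ℝ) (hlam : 0 < lam)
    (u : EuclideanSpace ℝ (Fin n) → ℝ)
    (hu : ContDiff ℝ (⊤ : ℕ∞) u) (hus : HasCompactSupport u)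
    (f : EuclideanSpace ℝ (Fin n) → ℝ)
    (hfdef : ∀ x, f x = lam * u x - ellOp n U u x) :
    (Real.sqrt (∫ x, (u x) ^ 2 ∂(weightedGaussian n U))
        ≤ lam⁻¹ * Real.sqrt (∫ x, (f x) ^ 2 ∂(weightedGaussian n U))) ∧
    (Real.sqrt (∫ x, ‖gradient u x‖ ^ 2 ∂(weightedGaussian n U))
        ≤ (Real.sqrt lam)⁻¹ * Real.sqrt (∫ x, (f x) ^ 2 ∂(weightedGaussian n U))) ∧
    (∫ x, (∑ i, ∑ j,
          (fderiv ℝ (fun y => fderiv ℝ u y (EuclideanSpace.single j (1 : ℝ))) x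
            (EuclideanSpace.single i (1 : ℝ))) ^ 2)
          ∂(weightedGaussian n U))
      + (∫ x, fderiv ℝ (fun y => fderiv ℝ U y (gradient u x)) x (gradient u x)
          ∂(weightedGaussian n U))
      ≤ 2 * ∫ x, (f x) ^ 2 ∂(weightedGaussian n U) := by
  classical
  set ν := weightedGaussian n U with hν
  have Cu : Continuous u := hu.continuous
  have C1 : ∀ i, Continuous (pd u i) := fun i => pd_continuous hu (by simp) i
  have S1 : ∀ i, HasCompactSupport (pd u i) := fun i => pd_hasCompactSupport hus i
  have C2 : ∀ j i, Continuous (pd (pd u j) i) :=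
    fun j i => pd_continuous (pd_contDiff_top hu j) (by simp) i
  have S2 : ∀ j i, HasCompactSupport (pd (pd u j) i) :=
    fun j i => pd_hasCompactSupport (S1 j) i
  have CU2 : ∀ j i, Continuous (pd (pd U j) i) :=
    fun j i => pd_continuous (pd_contDiff hU (by norm_num) j) le_rfl i
  have CLop : Continuous (Lop U u) := (Lop_contDiff hU hu).continuous
  have SLop : HasCompactSupport (Lop U u) := Lop_hasCompactSupport hus
  have Ig : ∀ (g : EuclideanSpace ℝ (Fin n) → ℝ), Continuous g → HasCompactSupport g →
      Integrable g ν := fun g hg hgs => integrable_nu hU hg hgs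
  have Cf : Continuous f := by
    have : f = fun x => lam * u x - Lop U u x :=
      funext fun x => by rw [hfdef x, ellOp_eq hU]
    rw [this]; exact (continuous_const.mul Cu).sub CLop
  have Sf : HasCompactSupport f := by
    have : f = fun x => lam * u x - Lop U u x :=
      funext fun x => by rw [hfdef x, ellOp_eq hU]
    rw [this]; exact hcs_sub (hcs_mulr hus) SLop
  have Iuu : Integrable (fun x => u x * u x) ν := Ig _ (Cu.mul Cu) (hcs_mull hus)
  have IuL : Integrable (fun x => u x * Lop U u x) ν := Ig _ (Cu.mul CLop) (hcs_mull hus)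
  have ILL : Integrable (fun x => Lop U u x * Lop U u x) ν :=
    Ig _ (CLop.mul CLop) (hcs_mull SLop)
  have Ifu : Integrable (fun x => f x * u x) ν := Ig _ (Cf.mul Cu) (hcs_mull Sf)
  have Iff : Integrable (fun x => f x * f x) ν := Ig _ (Cf.mul Cf) (hcs_mull Sf)
  have IB0 : Integrable (fun x => ∑ i, pd u i x * pd u i x) ν :=
    integrable_finset_sum _ (fun i _ => Ig _ ((C1 i).mul (C1 i)) (hcs_mull (S1 i)))
  -- notation
  set A := ∫ x, u x * u x ∂ν with hA
  set B := ∫ x, (∑ i, pd u i x * pd u i x) ∂ν with hB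
  set C := ∫ x, f x * f x ∂ν with hC
  set L2 := ∫ x, Lop U u x * Lop U u x ∂ν with hL2
  have hAnn : 0 ≤ A := integral_nonneg fun x => mul_self_nonneg _
  have hBnn : 0 ≤ B := integral_nonneg fun x =>
    Finset.sum_nonneg fun i _ => mul_self_nonneg _
  have hCnn : 0 ≤ C := integral_nonneg fun x => mul_self_nonneg _
  -- identity A
  have hIuL : ∫ x, u x * Lop U u x ∂ν = -B := by rw [hB]; exact idA hU hu hus
  -- expansion of C
  have hCexp : C = lam^2 * A - 2*lam*(∫ x, u x * Lop U u x ∂ν) + L2 := by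
    have ef : ∀ x, f x * f x
        = (lam^2 * (u x * u x) - 2*lam*(u x * Lop U u x)) + Lop U u x * Lop U u x :=
      fun x => by rw [hfdef x, ellOp_eq hU]; ring
    have h1 : Integrable (fun x => lam^2 * (u x * u x) - 2*lam*(u x * Lop U u x)) ν :=
      (Iuu.const_mul _).sub (IuL.const_mul _)
    rw [hC, integral_congr_ae (Filter.Eventually.of_forall ef),
      integral_add h1 ILL, integral_sub (Iuu.const_mul _) (IuL.const_mul _),
      integral_const_mul, integral_const_mul]
  have hCBA : C = lam^2 * A + 2*lam*B + L2 := by rw [hCexp, hIuL]; ring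
  -- ∫ f u
  have hfu : ∫ x, f x * u x ∂ν = lam * A + B := by
    have ef : ∀ x, f x * u x = lam * (u x * u x) - u x * Lop U u x :=
      fun x => by rw [hfdef x, ellOp_eq hU]; ring
    rw [integral_congr_ae (Filter.Eventually.of_forall ef),
      integral_sub (Iuu.const_mul _) IuL, integral_const_mul, hIuL, ← hA]
    ring
  -- Cauchy-Schwarz
  have hquad : ∀ t : ℝ, 0 ≤ C * (t*t) + (2 * ∫ x, f x * u x ∂ν) * t + A := by
    intro t
    have e : ∀ x, (t * f x + u x) * (t * f x + u x)
        = ((t*t) * (f x * f x) + (2*t) * (f x * u x)) + u x * u x := fun x => by ring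
    have h0 : 0 ≤ ∫ x, (t * f x + u x) * (t * f x + u x) ∂ν :=
      integral_nonneg fun x => mul_self_nonneg _
    have h12 : Integrable (fun x => (t*t) * (f x * f x) + (2*t) * (f x * u x)) ν :=
      (Iff.const_mul _).add (Ifu.const_mul _)
    rw [integral_congr_ae (Filter.Eventually.of_forall e),
      integral_add h12 Iuu,
      integral_add (Iff.const_mul _) (Ifu.const_mul _),
      integral_const_mul, integral_const_mul] at h0
    rw [← hC, ← hA] at h0
    linarith [h0]
  have hdisc := discrim_le_zero hquad
  rw [discrim] at hdisc
  have hCS : (∫ x, f x * u x ∂ν)^2 ≤ C * A := by nlinarith [hdisc]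
  -- basic sqrt facts
  set sA := Real.sqrt A with hsA
  set sC := Real.sqrt C with hsC
  have hsAnn : 0 ≤ sA := Real.sqrt_nonneg _
  have hsCnn : 0 ≤ sC := Real.sqrt_nonneg _
  have hsAA : sA * sA = A := Real.mul_self_sqrt hAnn
  have hsCC : sC * sC = C := Real.mul_self_sqrt hCnn
  have hI_le : ∫ x, f x * u x ∂ν ≤ sC * sA := by
    rcases le_or_gt (∫ x, f x * u x ∂ν) 0 with h | h
    · exact h.trans (by positivity)
    · have h1 : ∫ x, f x * u x ∂ν ≤ Real.sqrt (C * A) := by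
        rw [← Real.sqrt_sq h.le]
        exact Real.sqrt_le_sqrt hCS
      rwa [Real.sqrt_mul hCnn, ← hsC, ← hsA] at h1
  have hlamA : lam * A ≤ sC * sA := by
    have := hfu
    nlinarith [hBnn, hI_le]
  -- part (i)
  have part1 : sA ≤ lam⁻¹ * sC := by
    rcases eq_or_lt_of_le hsAnn with h0 | h0
    · rw [← h0]; positivity
    · have h1 : lam * sA ≤ sC := by
        have h2 : lam * (sA * sA) ≤ sC * sA := by rw [hsAA]; exact hlamA
        have := mul_le_mul_of_nonneg_right (le_refl sA) h0.le
        nlinarith [h2, h0]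
      have h3 := mul_le_mul_of_nonneg_left h1 (inv_nonneg.mpr hlam.le)
      calc sA = lam⁻¹ * (lam * sA) := by field_simp
        _ ≤ lam⁻¹ * sC := h3
  -- part (ii) prep
  have hBle : B ≤ lam⁻¹ * C := by
    have h1 : B ≤ sC * sA := by nlinarith [hfu, hI_le, hAnn, hlam.le]
    have h2 : sC * sA ≤ sC * (lam⁻¹ * sC) := mul_le_mul_of_nonneg_left part1 hsCnn
    have h3 : sC * (lam⁻¹ * sC) = lam⁻¹ * C := by rw [← hsCC]; ring
    linarith
  -- goal rewrites
  have gA : ∫ x, (u x)^2 ∂ν = A :=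
    integral_congr_ae (Filter.Eventually.of_forall fun x => by ring)
  have gC : ∫ x, (f x)^2 ∂ν = C :=
    integral_congr_ae (Filter.Eventually.of_forall fun x => by ring)
  have gB : ∫ x, ‖gradient u x‖^2 ∂ν = B := by
    rw [hB]
    refine integral_congr_ae (Filter.Eventually.of_forall fun x => ?_)
    show ‖gradient u x‖ ^ 2 = ∑ i, pd u i x * pd u i x
    rw [← real_inner_self_eq_norm_sq, PiLp.inner_apply]
    refine Finset.sum_congr rfl fun i _ => ?_
    simp [gradient_coord, RCLike.inner_apply]; ring
  have g3 : ∫ x, (∑ i, ∑ j,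
        (fderiv ℝ (fun y => fderiv ℝ u y (EuclideanSpace.single j (1 : ℝ))) x
          (EuclideanSpace.single i (1 : ℝ))) ^ 2) ∂ν
      = ∫ x, ∑ i, ∑ j, pd (pd u j) i x * pd (pd u j) i x ∂ν := by
    refine integral_congr_ae (Filter.Eventually.of_forall fun x => ?_)
    refine Finset.sum_congr rfl fun i _ => Finset.sum_congr rfl fun j _ => ?_
    rw [pow_two]
    rfl
  have g4 : ∀ x, fderiv ℝ (fun y => fderiv ℝ U y (gradient u x)) x (gradient u x)
      = ∑ i, ∑ j, pd (pd U j) i x * pd u i x * pd u j x := by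
    intro x
    have e1 : (fun y => fderiv ℝ U y (gradient u x))
        = fun y => ∑ j, pd U j y * gradient u x j :=
      funext fun y => fderiv_eq_sum U y (gradient u x)
    rw [e1, fderiv_eq_sum]
    refine Finset.sum_congr rfl fun i _ => ?_
    have dd : ∀ j : Fin n, DifferentiableAt ℝ
        (fun y => pd U j y * gradient u x j) x :=
      fun j => (((pd_contDiff (m := 1) hU (by norm_num) j).differentiable one_ne_zero) x).mul
        (differentiableAt_const _)
    rw [pd_sum _ _ (fun j _ => dd j) i, Finset.sum_mul]
    refine Finset.sum_congr rfl fun j _ => ?_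
    have e2 : pd (fun y => pd U j y * gradient u x j) i x
        = gradient u x j * pd (pd U j) i x := by
      rw [pd_mul (((pd_contDiff (m := 1) hU (by norm_num) j).differentiable one_ne_zero) x)
        (differentiableAt_const _)]
      simp [pd]
    rw [e2, gradient_coord, gradient_coord]
    ring
  have g4int : ∫ x, fderiv ℝ (fun y => fderiv ℝ U y (gradient u x)) x (gradient u x) ∂ν
      = ∫ x, ∑ i, ∑ j, pd (pd U j) i x * pd u i x * pd u j x ∂ν := by
    refine integral_congr_ae (Filter.Eventually.of_forall fun x => ?_)
    show fderiv ℝ (fun y => fderiv ℝ U y (gradient u x)) x (gradient u x) = _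
    exact g4 x
  refine ⟨?_, ?_, ?_⟩
  · rw [gA, gC]; exact part1
  · rw [gB, gC]
    have h1 : Real.sqrt B ≤ Real.sqrt (lam⁻¹ * C) := Real.sqrt_le_sqrt hBle
    have h2 : Real.sqrt (lam⁻¹ * C) = (Real.sqrt lam)⁻¹ * sC := by
      rw [Real.sqrt_mul (inv_nonneg.mpr hlam.le), Real.sqrt_inv, hsC]
    rw [← h2]; exact h1
  · rw [g3, g4int, gC]
    have hid := idB hU hu hus
    rw [← hν, ← hL2, ← hB] at hid
    -- hid : L2 = ∫ΣΣ q + ∫ΣΣ hess + B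
    have hL2le : L2 ≤ C := by nlinarith [hCBA, hAnn, hBnn, hlam]
    linarith [hid, hBnn, hCnn]
end

section
/- Let λ₁, λ₂ > 0 and let B be the open unit ball of ℝ². If φ : B → ℝ is differentiable on B and satisfies √λ₁ · ξ₁ · ∂₁φ(ξ₁,ξ₂) + √λ₂ · ξ₂ · ∂₂φ(ξ₁,ξ₂) = 0 for every (ξ₁,ξ₂) ∈ B, then φ is constant on B. -/
private lemma clm_apply_decomp (L : ℝ × ℝ →L[ℝ] ℝ) (x y : ℝ) :
    L (x, y) = x * L (1, 0) + y * L (0, 1) := by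
  have h : (x, y) = x • ((1:ℝ), (0:ℝ)) + y • ((0:ℝ), (1:ℝ)) := by
    simp [Prod.ext_iff]
  rw [h, map_add, map_smul, map_smul]; simp

private lemma eq_at_zero
    (l1 l2 : ℝ) (hl1 : 0 < l1) (hl2 : 0 < l2)
    (φ : ℝ × ℝ → ℝ)
    (hdiff : ∀ ξ : ℝ × ℝ, ξ.1 ^ 2 + ξ.2 ^ 2 < 1 → DifferentiableAt ℝ φ ξ)
    (hpde : ∀ ξ : ℝ × ℝ, ξ.1 ^ 2 + ξ.2 ^ 2 < 1 →
      Real.sqrt l1 * ξ.1 * fderiv ℝ φ ξ (1, 0)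
        + Real.sqrt l2 * ξ.2 * fderiv ℝ φ ξ (0, 1) = 0)
    (ξ : ℝ × ℝ) (hξ : ξ.1 ^ 2 + ξ.2 ^ 2 < 1) : φ ξ = φ (0, 0) := by
  set a := Real.sqrt l1 with ha
  set b := Real.sqrt l2 with hb
  have ha0 : 0 < a := Real.sqrt_pos.2 hl1
  have hb0 : 0 < b := Real.sqrt_pos.2 hl2
  set γ : ℝ → ℝ × ℝ := fun t => (ξ.1 * Real.exp (a * t), ξ.2 * Real.exp (b * t)) with hγ
  have hmem : ∀ t ≤ (0:ℝ), (γ t).1 ^ 2 + (γ t).2 ^ 2 < 1 := by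
    intro t ht
    have h1 : Real.exp (a * t) ≤ 1 := Real.exp_le_one_iff.2 (by nlinarith)
    have h2 : Real.exp (b * t) ≤ 1 := Real.exp_le_one_iff.2 (by nlinarith)
    have e1 := Real.exp_pos (a * t)
    have e2 := Real.exp_pos (b * t)
    have k1 : (ξ.1 * Real.exp (a * t)) ^ 2 ≤ ξ.1 ^ 2 := by
      have : Real.exp (a * t) ^ 2 ≤ 1 := by nlinarith
      nlinarith [sq_nonneg ξ.1]
    have k2 : (ξ.2 * Real.exp (b * t)) ^ 2 ≤ ξ.2 ^ 2 := by
      have : Real.exp (b * t) ^ 2 ≤ 1 := by nlinarith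
      nlinarith [sq_nonneg ξ.2]
    simp only [hγ]
    linarith
  have hderiv : ∀ t ≤ (0:ℝ), HasDerivAt (fun s => φ (γ s)) 0 t := by
    intro t ht
    have h1 : HasDerivAt (fun s : ℝ => ξ.1 * Real.exp (a * s))
        (ξ.1 * (Real.exp (a * t) * (a * 1))) t :=
      (((hasDerivAt_id t).const_mul a).exp).const_mul ξ.1
    have h2 : HasDerivAt (fun s : ℝ => ξ.2 * Real.exp (b * s))
        (ξ.2 * (Real.exp (b * t) * (b * 1))) t :=
      (((hasDerivAt_id t).const_mul b).exp).const_mul ξ.2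
    have hγd : HasDerivAt γ
        (ξ.1 * (Real.exp (a * t) * (a * 1)), ξ.2 * (Real.exp (b * t) * (b * 1))) t :=
      h1.prodMk h2
    have hmem' := hmem t ht
    have hcomp := (hdiff (γ t) hmem').hasFDerivAt.comp_hasDerivAt t hγd
    have hval : (fderiv ℝ φ (γ t))
        (ξ.1 * (Real.exp (a * t) * (a * 1)), ξ.2 * (Real.exp (b * t) * (b * 1))) = 0 := by
      rw [clm_apply_decomp]
      have := hpde (γ t) hmem'
      simp only [hγ] at this ⊢
      nlinarith [this]
    rwa [hval] at hcomp
  -- φ (γ t) = φ (γ 0) = φ ξ for all t ≤ 0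
  have hγ0 : γ 0 = ξ := by simp [hγ]
  have hconst : ∀ t ≤ (0:ℝ), φ (γ t) = φ ξ := by
    intro t ht
    have hcont : ContinuousOn (fun s => φ (γ s)) (Set.Icc t 0) := fun s hs =>
      ((hderiv s hs.2).continuousAt).continuousWithinAt
    have hd : ∀ s ∈ Set.Ico t 0, HasDerivWithinAt (fun s => φ (γ s)) 0 (Set.Ici s) s :=
      fun s hs => (hderiv s hs.2.le).hasDerivWithinAt
    have := constant_of_has_deriv_right_zero hcont hd 0 (Set.right_mem_Icc.2 ht)
    rw [hγ0] at this
    rw [← this]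
  -- limit as t → -∞
  have hlim1 : Filter.Tendsto (fun t : ℝ => ξ.1 * Real.exp (a * t)) Filter.atBot (nhds 0) := by
    have h : Filter.Tendsto (fun t : ℝ => a * t) Filter.atBot Filter.atBot :=
      Filter.Tendsto.const_mul_atBot ha0 Filter.tendsto_id
    have := (Real.tendsto_exp_atBot.comp h).const_mul ξ.1
    simpa using this
  have hlim2 : Filter.Tendsto (fun t : ℝ => ξ.2 * Real.exp (b * t)) Filter.atBot (nhds 0) := by
    have h : Filter.Tendsto (fun t : ℝ => b * t) Filter.atBot Filter.atBot :=
      Filter.Tendsto.const_mul_atBot hb0 Filter.tendsto_id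
    have := (Real.tendsto_exp_atBot.comp h).const_mul ξ.2
    simpa using this
  have hγlim : Filter.Tendsto γ Filter.atBot (nhds ((0:ℝ), (0:ℝ))) := by
    rw [nhds_prod_eq]
    exact hlim1.prodMk hlim2
  have hφcont : ContinuousAt φ ((0:ℝ), (0:ℝ)) :=
    (hdiff (0, 0) (by norm_num)).continuousAt
  have hlim : Filter.Tendsto (fun t => φ (γ t)) Filter.atBot (nhds (φ (0, 0))) :=
    hφcont.tendsto.comp hγlim
  have hlim' : Filter.Tendsto (fun _ : ℝ => φ ξ) Filter.atBot (nhds (φ (0, 0))) := by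
    apply hlim.congr'
    filter_upwards [Filter.eventually_le_atBot (0:ℝ)] with t ht using hconst t ht
  exact tendsto_nhds_unique tendsto_const_nhds hlim'

/-- a differentiable function `φ` on the open unit ball `B ⊆ ℝ²`
satisfying `√λ₁ ξ₁ ∂₁φ(ξ) + √λ₂ ξ₂ ∂₂φ(ξ) = 0` on `B` is constant on `B`. -/
theorem constant_on_ball_of_radial_pde
    (l1 l2 : ℝ) (hl1 : 0 < l1) (hl2 : 0 < l2)
    (φ : ℝ × ℝ → ℝ)
    (hdiff : ∀ ξ : ℝ × ℝ, ξ.1 ^ 2 + ξ.2 ^ 2 < 1 → DifferentiableAt ℝ φ ξ)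
    (hpde : ∀ ξ : ℝ × ℝ, ξ.1 ^ 2 + ξ.2 ^ 2 < 1 →
      Real.sqrt l1 * ξ.1 * fderiv ℝ φ ξ (1, 0)
        + Real.sqrt l2 * ξ.2 * fderiv ℝ φ ξ (0, 1) = 0) :
    ∀ ξ η : ℝ × ℝ, ξ.1 ^ 2 + ξ.2 ^ 2 < 1 → η.1 ^ 2 + η.2 ^ 2 < 1 → φ ξ = φ η := by
  intro ξ η hξ hη
  rw [eq_at_zero l1 l2 hl1 hl2 φ hdiff hpde ξ hξ,
    eq_at_zero l1 l2 hl1 hl2 φ hdiff hpde η hη]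
end
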